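/- arXiv:2101.11100 — 4 statements merged into one kernel-verified Lean document; each statement's English description precedes it below -/
import Mathlib

section
/- For every θ > 0 there exists a constant C_θ > 0 with the following property. Let R be either the ring ℤ of integers or the ring ℤ[i] of Gaussian integers, let m ∈ R be nonzero, let a₀, b₀ ∈ ℂ, and let M, N ≥ 1 be real numbers. Then the number of pairs (a, b) ∈ R × R satisfying m = a·b, |a − a₀| ≤ M and |b − b₀| ≤ N is at most C_θ · M^θ · N^θ. -/
open scoped BigOperators

/-- The set of pairs of integers `(a, b)` with `m = a * b`, `|a - a₀| ≤ M`, `|b - b₀| ≤ N`. -/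
def divisorPairsZ (m : ℤ) (a₀ b₀ : ℂ) (M N : ℝ) : Set (ℤ × ℤ) :=
  {p : ℤ × ℤ | m = p.1 * p.2 ∧ ‖(p.1 : ℂ) - a₀‖ ≤ M ∧
    ‖(p.2 : ℂ) - b₀‖ ≤ N}

/-- The set of pairs of Gaussian integers `(a, b)` with `m = a * b`, `|a - a₀| ≤ M`,
`|b - b₀| ≤ N`, where Gaussian integers are viewed inside `ℂ`. -/
def divisorPairsGI (m : GaussianInt) (a₀ b₀ : ℂ) (M N : ℝ) : Set (GaussianInt × GaussianInt) :=
  {p : GaussianInt × GaussianInt | m = p.1 * p.2 ∧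
    ‖GaussianInt.toComplex p.1 - a₀‖ ≤ M ∧
    ‖GaussianInt.toComplex p.2 - b₀‖ ≤ N}

/-!
Since `ℤ ⊆ ℤ[i]`, it suffices to count Gaussian pairs. Write `N` for the norm. If
`m = a₁ b₁ = a₂ b₂ = a₃ b₃` with distinct `aᵢ`, put `aᵢ = gcd(aᵢ, a₂) uᵢ` for `i = 1, 3`;
then `uᵢ ∣ b₂`, so `lcm(u₁, u₃) ∣ b₂`, while `gcd(u₁, u₃) ∣ a₁ - a₃`. Hence
`N a₁ N a₃ ≤ N(a₁ - a₂) N(a₃ - a₂) N(a₁ - a₃) N b₂`, and multiplying by the same bound for the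
`bᵢ` gives `N m ≤ (4MN)⁶`. So either there are at most two pairs, or there are at most as many
as divisors of `m`, and the divisor bound `d(m) ≪_ε N(m)^ε` finishes the proof. The divisor
bound is the classical one: `e + 1 ≤ N(p)^(e/k)` once `N p ≥ 2ᵏ`, and `e + 1 ≤ (k+1) N(p)^(e/k)`
for the finitely many primes of smaller norm.
-/

open UniqueFactorizationMonoid

theorem natCast_add_one_le_rpow_div_of_two_pow_le {k e : ℕ} {x : ℝ} (hk : 0 < k)
    (hx : 2 ^ k ≤ x) : (e : ℝ) + 1 ≤ x ^ ((e : ℝ) / k) := by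
  calc (e : ℝ) + 1 ≤ 2 ^ e := by exact_mod_cast Nat.lt_two_pow_self
    _ = ((2 : ℝ) ^ k) ^ ((e : ℝ) / k) := by
      rw [← Real.rpow_natCast 2 k, ← Real.rpow_mul zero_le_two, ← Real.rpow_natCast]
      field_simp
    _ ≤ x ^ ((e : ℝ) / k) := by gcongr

theorem natCast_add_one_le_mul_rpow_div_of_two_le {k e : ℕ} {x : ℝ} (hk : 0 < k)
    (hx : 2 ≤ x) : (e : ℝ) + 1 ≤ (k + 1) * x ^ ((e : ℝ) / k) := by
  have hq : ((e / k : ℕ) : ℝ) ≤ (e : ℝ) / k := Nat.cast_div_le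
  calc (e : ℝ) + 1 ≤ (k + 1) * ((e / k : ℕ) + 1 : ℕ) := by
        have := Nat.lt_mul_div_succ e hk
        exact_mod_cast (by nlinarith : e + 1 ≤ (k + 1) * (e / k + 1))
    _ ≤ (k + 1) * (2 : ℝ) ^ (e / k) := by
        gcongr
        exact_mod_cast Nat.lt_two_pow_self
    _ = (k + 1) * (2 : ℝ) ^ ((e / k : ℕ) : ℝ) := by rw [Real.rpow_natCast]
    _ ≤ (k + 1) * x ^ ((e : ℝ) / k) := by
        gcongr
        exact (Real.rpow_le_rpow_of_exponent_le (by norm_num) hq).trans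
          (Real.rpow_le_rpow zero_le_two hx (by positivity))

theorem Finset.prod_natCast_add_one_le_mul_rpow {ι : Type*} (T S : Finset ι) {k : ℕ} (hk : 0 < k)
    (x : ι → ℝ) (e : ι → ℕ) (hx : ∀ i ∈ T, 2 ≤ x i) (hS : ∀ i ∈ T, x i < 2 ^ k → i ∈ S) :
    ∏ i ∈ T, ((e i : ℝ) + 1) ≤ (k + 1) ^ S.card * (∏ i ∈ T, x i ^ e i) ^ (1 / k : ℝ) := by
  classical
  have hfactor : ∀ i ∈ T, (e i : ℝ) + 1 ≤
      (if i ∈ S then (k + 1 : ℝ) else 1) * x i ^ ((e i : ℝ) / k) := by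
    intro i hi
    by_cases hsmall : x i < 2 ^ k
    · rw [if_pos (hS i hi hsmall)]
      exact natCast_add_one_le_mul_rpow_div_of_two_le hk (hx i hi)
    · refine (natCast_add_one_le_rpow_div_of_two_pow_le hk (not_lt.1 hsmall)).trans
        (le_mul_of_one_le_left (Real.rpow_nonneg (by linarith [hx i hi]) _) ?_)
      split_ifs <;> simp
  have hroot : ∏ i ∈ T, x i ^ ((e i : ℝ) / k) = (∏ i ∈ T, x i ^ e i) ^ (1 / k : ℝ) := by
    rw [← Real.finsetProd_rpow _ _ fun i hi => pow_nonneg (by linarith [hx i hi]) _]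
    refine Finset.prod_congr rfl fun i hi => ?_
    rw [← Real.rpow_natCast, ← Real.rpow_mul (by linarith [hx i hi])]
    ring_nf
  calc ∏ i ∈ T, ((e i : ℝ) + 1)
      ≤ ∏ i ∈ T, (if i ∈ S then (k + 1 : ℝ) else 1) * x i ^ ((e i : ℝ) / k) :=
        Finset.prod_le_prod (fun _ _ => by positivity) hfactor
    _ = (k + 1) ^ (T ∩ S).card * (∏ i ∈ T, x i ^ e i) ^ (1 / k : ℝ) := by
        rw [Finset.prod_mul_distrib, Finset.prod_ite_mem, Finset.prod_const, hroot]
    _ ≤ (k + 1) ^ S.card * (∏ i ∈ T, x i ^ e i) ^ (1 / k : ℝ) := by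
        have : 0 ≤ ∏ i ∈ T, x i ^ e i :=
          Finset.prod_nonneg fun i hi => pow_nonneg (by linarith [hx i hi]) _
        gcongr
        · simp
        · exact Finset.inter_subset_right

theorem MonoidHom.map_le_map_of_dvd {M : Type*} [CommMonoid M] (f : M →* ℕ) {a b : M}
    (h : a ∣ b) (hb : f b ≠ 0) : f a ≤ f b :=
  Nat.le_of_dvd (Nat.pos_of_ne_zero hb) (map_dvd f h)

theorem finite_units_of_finite_setOf_le_one {M : Type*} [Monoid M] (f : M →* ℕ)
    (h : {x | f x ≤ 1}.Finite) : Finite Mˣ :=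
  Set.finite_univ_iff.1 <| Set.Finite.of_injOn (f := Units.val)
    (fun u _ => (Nat.isUnit_iff.1 (u.isUnit.map f)).le) Units.val_injective.injOn h

section UniqueFactorization

variable {α : Type*} [CommMonoidWithZero α] [UniqueFactorizationMonoid α]

theorem setOf_dvd_subset_image [NormalizationMonoid α] {m : α} (hm : m ≠ 0) :
    {a | a ∣ m} ⊆ (fun q : αˣ × Multiset α => (q.1 : α) * q.2.prod) ''
      (Set.univ ×ˢ Set.Iic (normalizedFactors m)) := by
  intro a (ha : a ∣ m)
  have ha0 : a ≠ 0 := by rintro rfl; exact hm (zero_dvd_iff.1 ha)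
  obtain ⟨u, hu⟩ := prod_normalizedFactors ha0
  exact ⟨(u, normalizedFactors a),
    ⟨trivial, (dvd_iff_normalizedFactors_le_normalizedFactors ha0 hm).1 ha⟩,
    (mul_comm _ _).trans hu⟩

theorem ncard_setOf_dvd_le [NormalizationMonoid α] [DecidableEq α] [Finite αˣ] {m : α}
    (hm : m ≠ 0) :
    {a | a ∣ m}.ncard ≤ Nat.card αˣ *
      ∏ p ∈ (normalizedFactors m).toFinset, ((normalizedFactors m).count p + 1) := by
  have hfin : (Set.univ ×ˢ Set.Iic (normalizedFactors m) : Set (αˣ × Multiset α)).Finite :=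
    Set.finite_univ.prod (Set.finite_Iic _)
  calc {a | a ∣ m}.ncard ≤ _ := Set.ncard_le_ncard (setOf_dvd_subset_image hm) (hfin.image _)
    _ ≤ (Set.univ ×ˢ Set.Iic (normalizedFactors m) : Set (αˣ × Multiset α)).ncard :=
        Set.ncard_image_le hfin
    _ = _ := by
        rw [Set.ncard_prod, Set.ncard_univ, ← Finset.coe_Iic, Set.ncard_coe_finset,
          Multiset.card_Iic]

theorem map_eq_prod_pow_count [NormalizationMonoid α] [DecidableEq α] (f : α →* ℕ) {m : α}
    (hm : m ≠ 0) :
    f m = ∏ p ∈ (normalizedFactors m).toFinset, f p ^ (normalizedFactors m).count p := by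
  rw [← associated_iff_eq.1 ((prod_normalizedFactors hm).map f), map_multiset_prod,
    Finset.prod_multiset_map_count]

theorem exists_ncard_setOf_dvd_le_mul_rpow (f : α →* ℕ) (hprime : ∀ p, Prime p → 2 ≤ f p)
    (hfin : ∀ B, {x | f x ≤ B}.Finite) {ε : ℝ} (hε : 0 < ε) :
    ∃ C > 0, ∀ m ≠ 0, ({a | a ∣ m}.ncard : ℝ) ≤ C * (f m : ℝ) ^ ε := by
  classical
  let := UniqueFactorizationMonoid.strongNormalizationMonoid (α := α)
  have := finite_units_of_finite_setOf_le_one f (hfin 1)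
  obtain ⟨k, hk⟩ : ∃ k : ℕ, 1 / ε ≤ k := ⟨⌈1 / ε⌉₊, Nat.le_ceil _⟩
  have hk0 : 0 < k := by exact_mod_cast (one_div_pos.2 hε).trans_le hk
  have hkε : 1 / (k : ℝ) ≤ ε := by
    rw [div_le_iff₀ (by positivity)]; rw [div_le_iff₀ hε] at hk; linarith
  set S := (hfin (2 ^ k)).toFinset
  refine ⟨Nat.card αˣ * (k + 1) ^ S.card, by have := Nat.card_pos (α := αˣ); positivity,
    fun m hm => ?_⟩
  set F := normalizedFactors m
  have hF : ∀ p ∈ F.toFinset, 2 ≤ (f p : ℝ) := fun p hp => by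
    exact_mod_cast hprime p (prime_of_normalized_factor p (Multiset.mem_toFinset.1 hp))
  have hfm : (f m : ℝ) = ∏ p ∈ F.toFinset, (f p : ℝ) ^ F.count p := by
    rw [map_eq_prod_pow_count f hm]; push_cast; rfl
  have hfm1 : 1 ≤ (f m : ℝ) := hfm ▸ Finset.one_le_prod fun p hp =>
    one_le_pow₀ (by linarith [hF p hp])
  calc ({a | a ∣ m}.ncard : ℝ) ≤ Nat.card αˣ * ∏ p ∈ F.toFinset, ((F.count p : ℝ) + 1) := by
        exact_mod_cast ncard_setOf_dvd_le hm
    _ ≤ Nat.card αˣ * ((k + 1) ^ S.card * (f m : ℝ) ^ (1 / k : ℝ)) := by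
        rw [hfm]
        gcongr
        refine Finset.prod_natCast_add_one_le_mul_rpow _ _ hk0 _ _ hF fun p _ hp => ?_
        exact (hfin _).mem_toFinset.2 (by exact_mod_cast hp.le)
    _ ≤ Nat.card αˣ * (k + 1) ^ S.card * (f m : ℝ) ^ ε := by
        rw [mul_assoc]
        gcongr

end UniqueFactorization

section GCDDomain

variable {α : Type*} [CommRing α] [IsDomain α] [GCDMonoid α]

theorem exists_eq_gcd_mul_dvd_of_mul_eq_mul {a b a' b' : α} (ha : a ≠ 0) (h : a * b = a' * b') :
    ∃ u, a = gcd a a' * u ∧ u ∣ b' := by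
  obtain ⟨u, u', hu, hu', hcop⟩ := extract_gcd a a'
  refine ⟨u, hu, (gcd_isUnit_iff_isRelPrime.1 hcop).dvd_of_dvd_mul_left ⟨b, ?_⟩⟩
  apply mul_left_cancel₀ (gcd_ne_zero_of_left ha)
  linear_combination b * hu - h - b' * hu'

variable (f : α →* ℕ) (hf : ∀ x ≠ 0, f x ≠ 0)
include hf

theorem map_mul_map_le_of_mul_eq_mul {a₁ b₁ a₂ b₂ a₃ b₃ : α} (h₁ : a₁ * b₁ = a₂ * b₂)
    (h₃ : a₃ * b₃ = a₂ * b₂) (hb₂ : b₂ ≠ 0) (h₁₂ : a₁ ≠ a₂) (h₃₂ : a₃ ≠ a₂) (h₁₃ : a₁ ≠ a₃) :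
    f a₁ * f a₃ ≤ f (a₁ - a₂) * f (a₃ - a₂) * (f (a₁ - a₃) * f b₂) := by
  have hne : ∀ {a b : α}, a * b = a₂ * b₂ → a ≠ a₂ → a ≠ 0 := by
    rintro a b h ha rfl
    rw [zero_mul, eq_comm, mul_eq_zero, or_iff_left hb₂] at h
    exact ha h.symm
  have hsub : ∀ {a b : α}, a ≠ b → f (a - b) ≠ 0 := fun h => hf _ (sub_ne_zero.2 h)
  obtain ⟨u₁, hu₁, hu₁b⟩ := exists_eq_gcd_mul_dvd_of_mul_eq_mul (hne h₁ h₁₂) h₁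
  obtain ⟨u₃, hu₃, hu₃b⟩ := exists_eq_gcd_mul_dvd_of_mul_eq_mul (hne h₃ h₃₂) h₃
  have hg₁ : f (gcd a₁ a₂) ≤ f (a₁ - a₂) :=
    f.map_le_map_of_dvd (dvd_sub (gcd_dvd_left _ _) (gcd_dvd_right _ _)) (hsub h₁₂)
  have hg₃ : f (gcd a₃ a₂) ≤ f (a₃ - a₂) :=
    f.map_le_map_of_dvd (dvd_sub (gcd_dvd_left _ _) (gcd_dvd_right _ _)) (hsub h₃₂)
  have hgcd : f (gcd u₁ u₃) ≤ f (a₁ - a₃) := by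
    refine f.map_le_map_of_dvd (dvd_sub ?_ ?_) (hsub h₁₃)
    · exact (gcd_dvd_left _ _).trans (hu₁ ▸ dvd_mul_left _ _)
    · exact (gcd_dvd_right _ _).trans (hu₃ ▸ dvd_mul_left _ _)
  have hlcm : f (lcm u₁ u₃) ≤ f b₂ := f.map_le_map_of_dvd (lcm_dvd hu₁b hu₃b) (hf _ hb₂)
  have hu : f u₁ * f u₃ = f (gcd u₁ u₃) * f (lcm u₁ u₃) := by
    rw [← map_mul, ← map_mul, associated_iff_eq.1 ((gcd_mul_lcm u₁ u₃).map f)]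
  calc f a₁ * f a₃ = f (gcd a₁ a₂) * f (gcd a₃ a₂) * (f u₁ * f u₃) := by
        conv_lhs => rw [hu₁, hu₃, map_mul, map_mul]
        ring
    _ ≤ _ := by rw [hu]; gcongr

theorem map_le_of_three_factorizations {m a₁ b₁ a₂ b₂ a₃ b₃ : α} (hm : m ≠ 0)
    (h₁ : m = a₁ * b₁) (h₂ : m = a₂ * b₂) (h₃ : m = a₃ * b₃)
    (h₁₂ : a₁ ≠ a₂) (h₃₂ : a₃ ≠ a₂) (h₁₃ : a₁ ≠ a₃) :
    f m ≤ f (a₁ - a₂) * f (a₃ - a₂) * f (a₁ - a₃) * (f (b₁ - b₂) * f (b₃ - b₂) * f (b₁ - b₃)) := by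
  have hne : ∀ {a b a' b'}, m = a * b → m = a' * b' → a ≠ a' → b ≠ b' := by
    rintro a b a' b h h' ha rfl
    exact ha (mul_right_cancel₀ (right_ne_zero_of_mul (h ▸ hm)) (h.symm.trans h'))
  have hmul : ∀ {a b}, m = a * b → f m = f a * f b := fun h => h ▸ map_mul f _ _
  have hA := map_mul_map_le_of_mul_eq_mul f hf (h₁.symm.trans h₂) (h₃.symm.trans h₂)
    (right_ne_zero_of_mul (h₂ ▸ hm)) h₁₂ h₃₂ h₁₃
  have hB := map_mul_map_le_of_mul_eq_mul f hf (b₂ := a₂)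
    (by rw [mul_comm, ← h₁, h₂, mul_comm]) (by rw [mul_comm, ← h₃, h₂, mul_comm])
    (left_ne_zero_of_mul (h₂ ▸ hm)) (hne h₁ h₂ h₁₂) (hne h₃ h₂ h₃₂) (hne h₁ h₃ h₁₃)
  refine Nat.le_of_mul_le_mul_right ?_ (Nat.pos_of_ne_zero (hf m hm))
  calc f m * f m = (f a₁ * f a₃) * (f b₁ * f b₃) := by
        nth_rw 1 [hmul h₁]; rw [hmul h₃]; ring
    _ ≤ (f (a₁ - a₂) * f (a₃ - a₂) * (f (a₁ - a₃) * f b₂)) *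
        (f (b₁ - b₂) * f (b₃ - b₂) * (f (b₁ - b₃) * f a₂)) := Nat.mul_le_mul hA hB
    _ = _ := by rw [hmul h₂]; ring

end GCDDomain

namespace GaussianInt

def natNorm : GaussianInt →* ℕ := Int.natAbsHom.toMonoidHom.comp Zsqrtd.normMonoidHom

theorem natNorm_apply (z : GaussianInt) : natNorm z = z.norm.natAbs := rfl

theorem natCast_natNorm (z : GaussianInt) : (natNorm z : ℝ) = ‖(z : ℂ)‖ ^ 2 := by
  rw [natNorm_apply, natCast_natAbs_norm, intCast_real_norm, Complex.normSq_eq_norm_sq]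

theorem natNorm_ne_zero {z : GaussianInt} (hz : z ≠ 0) : natNorm z ≠ 0 := by
  simpa [natNorm_apply] using hz

theorem two_le_natNorm_of_prime {p : GaussianInt} (hp : Prime p) : 2 ≤ natNorm p := by
  have h1 : natNorm p ≠ 1 := fun h => hp.not_isUnit (Zsqrtd.norm_eq_one_iff.1 h)
  have h0 := natNorm_ne_zero hp.ne_zero
  omega

theorem finite_setOf_natNorm_le (B : ℕ) : {z : GaussianInt | natNorm z ≤ B}.Finite := by
  refine Set.Finite.of_finite_image ?_ (f := fun z : GaussianInt => (z.re, z.im))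
    fun z _ w _ h => Zsqrtd.ext (congrArg Prod.fst h) (congrArg Prod.snd h)
  refine ((Set.finite_Icc (-(B : ℤ)) B).prod (Set.finite_Icc (-(B : ℤ)) B)).subset ?_
  rintro _ ⟨z, hz, rfl⟩
  have hz : z.re.natAbs * z.re.natAbs + z.im.natAbs * z.im.natAbs ≤ B := by
    rwa [← natAbs_norm_eq]
  have := Nat.le_mul_self z.re.natAbs
  have := Nat.le_mul_self z.im.natAbs
  simp only [Set.mem_prod, Set.mem_Icc]
  omega

theorem finite_setOf_dvd {m : GaussianInt} (hm : m ≠ 0) : {a | a ∣ m}.Finite :=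
  (finite_setOf_natNorm_le (natNorm m)).subset fun _ ha =>
    natNorm.map_le_map_of_dvd ha (natNorm_ne_zero hm)

theorem injOn_fst_divisorPairsGI {m : GaussianInt} (hm : m ≠ 0) (a₀ b₀ : ℂ) (M N : ℝ) :
    Set.InjOn Prod.fst (divisorPairsGI m a₀ b₀ M N) := by
  rintro ⟨a, b⟩ ⟨h, -⟩ ⟨a', b'⟩ ⟨h', -⟩ (rfl : a = a')
  exact Prod.ext rfl (mul_left_cancel₀ (left_ne_zero_of_mul (h ▸ hm)) (h.symm.trans h'))

theorem natNorm_sub_le {z w : GaussianInt} {c : ℂ} {r : ℝ} (hz : ‖(z : ℂ) - c‖ ≤ r)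
    (hw : ‖(w : ℂ) - c‖ ≤ r) : (natNorm (z - w) : ℝ) ≤ (2 * r) ^ 2 := by
  rw [natCast_natNorm, toComplex_sub]
  gcongr
  calc ‖(z : ℂ) - w‖ ≤ ‖(z : ℂ) - c‖ + ‖c - w‖ := norm_sub_le_norm_sub_add_norm_sub ..
    _ ≤ 2 * r := by rw [norm_sub_rev c]; linarith

theorem natNorm_le_of_three_le_ncard_divisorPairsGI {m : GaussianInt} (hm : m ≠ 0) {a₀ b₀ : ℂ}
    {M N : ℝ} (h3 : 3 ≤ (divisorPairsGI m a₀ b₀ M N).ncard) :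
    (natNorm m : ℝ) ≤ (4 * M * N) ^ 6 := by
  let := EuclideanDomain.gcdMonoid GaussianInt
  obtain ⟨t, hts, ht⟩ := Set.exists_subset_card_eq h3
  obtain ⟨⟨a₁, b₁⟩, ⟨a₂, b₂⟩, ⟨a₃, b₃⟩, h₁₂, h₁₃, h₂₃, rfl⟩ := Set.ncard_eq_three.1 ht
  have hp₁ : (a₁, b₁) ∈ divisorPairsGI m a₀ b₀ M N := hts (by simp)
  have hp₂ : (a₂, b₂) ∈ divisorPairsGI m a₀ b₀ M N := hts (by simp)
  have hp₃ : (a₃, b₃) ∈ divisorPairsGI m a₀ b₀ M N := hts (by simp)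
  have hinj := injOn_fst_divisorPairsGI hm a₀ b₀ M N
  have key := map_le_of_three_factorizations natNorm (fun _ => natNorm_ne_zero) hm
    hp₁.1 hp₂.1 hp₃.1 (fun h => h₁₂ (hinj hp₁ hp₂ h)) (fun h => h₂₃ (hinj hp₂ hp₃ h.symm))
    (fun h => h₁₃ (hinj hp₁ hp₃ h))
  obtain ⟨-, ha₁, hb₁⟩ := hp₁
  obtain ⟨-, ha₂, hb₂⟩ := hp₂
  obtain ⟨-, ha₃, hb₃⟩ := hp₃
  calc (natNorm m : ℝ)
      ≤ ((natNorm (a₁ - a₂) * natNorm (a₃ - a₂) * natNorm (a₁ - a₃) *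
          (natNorm (b₁ - b₂) * natNorm (b₃ - b₂) * natNorm (b₁ - b₃)) : ℕ) : ℝ) := by
        exact_mod_cast key
    _ ≤ (2 * M) ^ 2 * (2 * M) ^ 2 * (2 * M) ^ 2 * ((2 * N) ^ 2 * (2 * N) ^ 2 * (2 * N) ^ 2) := by
        push_cast
        gcongr <;> exact natNorm_sub_le ‹_› ‹_›
    _ = (4 * M * N) ^ 6 := by ring

theorem exists_ncard_divisorPairsGI_le {θ : ℝ} (hθ : 0 < θ) :
    ∃ C > 0, ∀ m : GaussianInt, m ≠ 0 → ∀ (a₀ b₀ : ℂ) (M N : ℝ), 1 ≤ M → 1 ≤ N →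
      (divisorPairsGI m a₀ b₀ M N).Finite ∧
      ((divisorPairsGI m a₀ b₀ M N).ncard : ℝ) ≤ C * M ^ θ * N ^ θ := by
  obtain ⟨C, hC, hdiv⟩ := exists_ncard_setOf_dvd_le_mul_rpow natNorm
    (fun _ => two_le_natNorm_of_prime) finite_setOf_natNorm_le (by positivity : 0 < θ / 6)
  refine ⟨max 2 (C * 4 ^ θ), by positivity, fun m hm a₀ b₀ M N hM hN => ?_⟩
  set S := divisorPairsGI m a₀ b₀ M N
  have hinj := injOn_fst_divisorPairsGI hm a₀ b₀ M N
  have hmaps : Set.MapsTo Prod.fst S {a | a ∣ m} := fun p hp => ⟨p.2, hp.1⟩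
  refine ⟨Set.Finite.of_finite_image ((finite_setOf_dvd hm).subset hmaps.image_subset) hinj, ?_⟩
  have hMN : 1 ≤ M ^ θ * N ^ θ :=
    one_le_mul_of_one_le_of_one_le (Real.one_le_rpow hM hθ.le) (Real.one_le_rpow hN hθ.le)
  rw [mul_assoc]
  rcases le_or_gt S.ncard 2 with h2 | h3
  · calc (S.ncard : ℝ) ≤ 2 := by exact_mod_cast h2
      _ ≤ max 2 (C * 4 ^ θ) * (M ^ θ * N ^ θ) :=
        (le_max_left _ _).trans (le_mul_of_one_le_right (by positivity) hMN)
  · calc (S.ncard : ℝ) ≤ {a | a ∣ m}.ncard := by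
          exact_mod_cast Set.ncard_le_ncard_of_injOn _ hmaps hinj (finite_setOf_dvd hm)
      _ ≤ C * (natNorm m : ℝ) ^ (θ / 6) := hdiv m hm
      _ ≤ C * ((4 * M * N) ^ 6) ^ (θ / 6) := by
          gcongr
          exact natNorm_le_of_three_le_ncard_divisorPairsGI hm h3
      _ = C * 4 ^ θ * (M ^ θ * N ^ θ) := by
          rw [← Real.rpow_natCast, ← Real.rpow_mul (by positivity),
            Real.mul_rpow (by positivity) (by positivity),
            Real.mul_rpow (by positivity) (by positivity)]
          ring_nf
      _ ≤ max 2 (C * 4 ^ θ) * (M ^ θ * N ^ θ) := by gcongr; exact le_max_right _ _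

end GaussianInt

theorem mapsTo_divisorPairsZ (m : ℤ) (a₀ b₀ : ℂ) (M N : ℝ) :
    Set.MapsTo (Prod.map (Int.cast : ℤ → GaussianInt) Int.cast) (divisorPairsZ m a₀ b₀ M N)
      (divisorPairsGI m a₀ b₀ M N) := by
  rintro ⟨a, b⟩ ⟨h, ha, hb⟩
  exact ⟨by simp [h], by simpa using ha, by simpa using hb⟩

/-- Lemma 2.4(1): divisor counting bound in `ℤ` and `ℤ[i]`. -/
theorem divisor_counting_bound :
    ∀ θ : ℝ, 0 < θ → ∃ C : ℝ, 0 < C ∧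
      ((∀ (m : ℤ), m ≠ 0 → ∀ (a₀ b₀ : ℂ) (M N : ℝ), 1 ≤ M → 1 ≤ N →
          (divisorPairsZ m a₀ b₀ M N).Finite ∧
          ((divisorPairsZ m a₀ b₀ M N).ncard : ℝ) ≤ C * M ^ θ * N ^ θ) ∧
       (∀ (m : GaussianInt), m ≠ 0 → ∀ (a₀ b₀ : ℂ) (M N : ℝ), 1 ≤ M → 1 ≤ N →
          (divisorPairsGI m a₀ b₀ M N).Finite ∧
          ((divisorPairsGI m a₀ b₀ M N).ncard : ℝ) ≤ C * M ^ θ * N ^ θ)) := by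
  intro θ hθ
  obtain ⟨C, hC, hGI⟩ := GaussianInt.exists_ncard_divisorPairsGI_le hθ
  refine ⟨C, hC, fun m hm a₀ b₀ M N hM hN => ?_, hGI⟩
  obtain ⟨hfin, hcard⟩ := hGI m (Int.cast_ne_zero.2 hm) a₀ b₀ M N hM hN
  have hmaps := mapsTo_divisorPairsZ m a₀ b₀ M N
  have hinj : Set.InjOn (Prod.map (Int.cast : ℤ → GaussianInt) (Int.cast : ℤ → GaussianInt))
      (divisorPairsZ m a₀ b₀ M N) :=
    (Int.cast_injective.prodMap Int.cast_injective).injOn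
  exact ⟨Set.Finite.of_finite_image (hfin.subset hmaps.image_subset) hinj,
    (Nat.cast_le.2 (Set.ncard_le_ncard_of_injOn _ hmaps hinj hfin)).trans hcard⟩
end

section
/- For every θ > 0 there exists a constant C_θ > 0 such that for all real parameters N, N₁, N₂, N₃, R ≥ 1 and every integer Ω₀: (i) for every fixed pair (k, k₁) ∈ (ℤ³)², the fiber S_{k k₁} satisfies #S_{k k₁} ≤ C_θ · (min(N₂, N₃, R))^{2+θ}; and (ii) for every fixed pair (k₂, k₃) ∈ (ℤ³)², the fiber S_{k₂ k₃} satisfies #S_{k₂ k₃} ≤ C_θ · (min(N, N₁, R))^{2+θ}. -/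
/-!
Fixing `(k, k₁)` determines `k₃ = k₂ + (k - k₁)`, and substituting this into the resonance
condition turns it into the linear equation `2 ⟪k - k₁, k₂⟫ = const`, with `k - k₁ ≠ 0` because
`k₂ ≠ k₃`. So `k₂` is a lattice point of a plane in `ℤ³`; it also lies in a cube of half-side
`M = min(N₂, N₃, R)`, centred at `0`, `k₁ - k` or `k₁` according to which constraint realises
the minimum. Projecting away a coordinate in which the normal vector is nonzero is injective on
the plane, so there are at most `(2M + 1)² ≤ 9M²` such points. The fiber over `(k₂, k₃)` is
symmetric, with `k₁` on the plane `2 ⟪k₃ - k₂, k₁⟫ = const` and `M = min(N, N₁, R)`.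
-/

open scoped BigOperators

/-- Euclidean norm of a point of `ℤ³`. -/
noncomputable def enorm3 (k : Fin 3 → ℤ) : ℝ := Real.sqrt (∑ i, ((k i : ℝ)) ^ 2)

/-- Japanese bracket `⟨k⟩ = (1 + |k|²)^{1/2}` of a point of `ℤ³`. -/
noncomputable def jap3 (k : Fin 3 → ℤ) : ℝ := Real.sqrt (1 + ∑ i, ((k i : ℝ)) ^ 2)

/-- Squared Euclidean norm `|k|²` as an integer. -/
def nsq3 (k : Fin 3 → ℤ) : ℤ := ∑ i, (k i) ^ 2

/-- The set `S` of Lemma 2.4(2): quadruples `(k, k₁, k₂, k₃)` in `(ℤ³)⁴` with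
`k = k₁ - k₂ + k₃`, `k₂ ∉ {k₁, k₃}`, `|k| ≤ N`, `|k|² - |k₁|² + |k₂|² - |k₃|² = Ω₀`,
`N_j/2 < |k_j| ≤ N_j` and `R/2 < ⟨k₁ - k₂⟩ ≤ R`. -/
def Sset (N N₁ N₂ N₃ R : ℝ) (Ω₀ : ℤ) :
    Set ((Fin 3 → ℤ) × (Fin 3 → ℤ) × (Fin 3 → ℤ) × (Fin 3 → ℤ)) :=
  {q | q.1 = q.2.1 - q.2.2.1 + q.2.2.2 ∧
       q.2.2.1 ≠ q.2.1 ∧ q.2.2.1 ≠ q.2.2.2 ∧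
       enorm3 q.1 ≤ N ∧
       nsq3 q.1 - nsq3 q.2.1 + nsq3 q.2.2.1 - nsq3 q.2.2.2 = Ω₀ ∧
       N₁ / 2 < enorm3 q.2.1 ∧ enorm3 q.2.1 ≤ N₁ ∧
       N₂ / 2 < enorm3 q.2.2.1 ∧ enorm3 q.2.2.1 ≤ N₂ ∧
       N₃ / 2 < enorm3 q.2.2.2 ∧ enorm3 q.2.2.2 ≤ N₃ ∧
       R / 2 < jap3 (q.2.1 - q.2.2.1) ∧ jap3 (q.2.1 - q.2.2.1) ≤ R}

/-- The fiber `S_{k k₁}` of `S` over a fixed pair `(k, k₁)`. -/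
def SsetKK1 (N N₁ N₂ N₃ R : ℝ) (Ω₀ : ℤ) (k k₁ : Fin 3 → ℤ) :
    Set ((Fin 3 → ℤ) × (Fin 3 → ℤ)) :=
  {q | (k, k₁, q.1, q.2) ∈ Sset N N₁ N₂ N₃ R Ω₀}

/-- The fiber `S_{k₂ k₃}` of `S` over a fixed pair `(k₂, k₃)`. -/
def SsetK2K3 (N N₁ N₂ N₃ R : ℝ) (Ω₀ : ℤ) (k₂ k₃ : Fin 3 → ℤ) :
    Set ((Fin 3 → ℤ) × (Fin 3 → ℤ)) :=
  {q | (q.1, q.2, k₂, k₃) ∈ Sset N N₁ N₂ N₃ R Ω₀}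

open Set

theorem ncard_hyperplane_inter_Icc_le {n : ℕ} {v : Fin (n + 1) → ℤ} (hv : v ≠ 0) (c : ℤ)
    (z : Fin (n + 1) → ℤ) (B : ℕ) :
    {x ∈ Icc (z - (B : Fin (n + 1) → ℤ)) (z + B) | ∑ i, v i * x i = c}.ncard ≤
      (2 * B + 1) ^ n := by
  obtain ⟨p, hp⟩ := Function.ne_iff.mp hv
  set H := {x ∈ Icc (z - (B : Fin (n + 1) → ℤ)) (z + B) | ∑ i, v i * x i = c}
  let π : (Fin (n + 1) → ℤ) → Fin n → ℤ := Fin.removeNth p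
  have hmaps : ∀ x ∈ H, π x ∈ Icc (π (z - B)) (π (z + B)) :=
    fun x hx => ⟨fun j => hx.1.1 _, fun j => hx.1.2 _⟩
  have hinj : InjOn π H := by
    intro x hx y hy hxy
    have hrest : ∀ j, x (p.succAbove j) = y (p.succAbove j) := congrFun hxy
    have hsum := hx.2.trans hy.2.symm
    rw [Fin.sum_univ_succAbove _ p, Fin.sum_univ_succAbove _ p] at hsum
    simp only [hrest, add_left_inj] at hsum
    rw [← Fin.insertNth_self_removeNth p x, ← Fin.insertNth_self_removeNth p y]
    simp only [π] at hxy
    rw [hxy, mul_left_cancel₀ hp hsum]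
  calc H.ncard ≤ (Icc (π (z - B)) (π (z + B))).ncard :=
        ncard_le_ncard_of_injOn π hmaps hinj (finite_Icc _ _)
    _ = (2 * B + 1) ^ n := by
      rw [← Finset.coe_Icc, ncard_coe_finset, Pi.card_Icc, ← Fin.prod_const]
      refine Finset.prod_congr rfl fun j _ => ?_
      simp only [π, Fin.removeNth, Pi.add_apply, Pi.sub_apply, Pi.natCast_apply, Int.card_Icc]
      omega

theorem abs_apply_le_enorm3 (x : Fin 3 → ℤ) (i : Fin 3) : |(x i : ℝ)| ≤ enorm3 x :=
  Real.abs_le_sqrt <|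
    Finset.single_le_sum (f := fun j => (x j : ℝ) ^ 2) (fun _ _ => sq_nonneg _) (Finset.mem_univ i)

theorem enorm3_le_jap3 (x : Fin 3 → ℤ) : enorm3 x ≤ jap3 x :=
  Real.sqrt_le_sqrt (by linarith)

theorem enorm3_sub_comm (x y : Fin 3 → ℤ) : enorm3 (x - y) = enorm3 (y - x) := by
  simp only [enorm3, Pi.sub_apply, Int.cast_sub, ← neg_sub (x _ : ℝ), neg_sq]

theorem mem_Icc_natFloor_of_enorm3_sub_le {x z : Fin 3 → ℤ} {M : ℝ} (h : enorm3 (x - z) ≤ M) :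
    x ∈ Icc (z - (⌊M⌋₊ : Fin 3 → ℤ)) (z + ⌊M⌋₊) := by
  have hcoord : ∀ i, |x i - z i| ≤ ⌊M⌋₊ := fun i => by
    obtain ⟨a, ha⟩ := Int.eq_ofNat_of_zero_le (abs_nonneg (x i - z i))
    rw [ha, Nat.cast_le]
    refine Nat.le_floor ?_
    have : ((a : ℤ) : ℝ) = |((x - z) i : ℝ)| := by rw [← ha, Pi.sub_apply]; push_cast; rfl
    exact_mod_cast this.trans_le ((abs_apply_le_enorm3 (x - z) i).trans h)
  exact ⟨fun i => by simp only [Pi.sub_apply, Pi.natCast_apply]; linarith [abs_le.mp (hcoord i)],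
    fun i => by simp only [Pi.add_apply, Pi.natCast_apply]; linarith [abs_le.mp (hcoord i)]⟩

theorem finite_and_ncard_le_of_injOn_plane {α : Type*} {s : Set α} {f : α → Fin 3 → ℤ}
    (hf : InjOn f s) {v : Fin 3 → ℤ} (hv : v ≠ 0) {c : ℤ} {z : Fin 3 → ℤ} {M : ℝ} (hM : 1 ≤ M)
    (hs : ∀ q ∈ s, ∑ i, v i * f q i = c ∧ enorm3 (f q - z) ≤ M) :
    s.Finite ∧ (s.ncard : ℝ) ≤ 9 * M ^ 2 := by
  set B := ⌊M⌋₊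
  have hmaps : MapsTo f s {x ∈ Icc (z - (B : Fin 3 → ℤ)) (z + B) | ∑ i, v i * x i = c} :=
    fun q hq => ⟨mem_Icc_natFloor_of_enorm3_sub_le (hs q hq).2, (hs q hq).1⟩
  have hfin : {x ∈ Icc (z - (B : Fin 3 → ℤ)) (z + B) | ∑ i, v i * x i = c}.Finite :=
    (finite_Icc _ _).subset (sep_subset _ _)
  refine ⟨hfin.of_injOn hmaps hf, ?_⟩
  have hcard : s.ncard ≤ (2 * B + 1) ^ 2 :=
    (ncard_le_ncard_of_injOn f hmaps hf hfin).trans (ncard_hyperplane_inter_Icc_le hv c z B)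
  have hB : (B : ℝ) ≤ M := Nat.floor_le (by linarith)
  calc (s.ncard : ℝ) ≤ (2 * B + 1) ^ 2 := by exact_mod_cast hcard
    _ ≤ (3 * M) ^ 2 := by gcongr; linarith
    _ = 9 * M ^ 2 := by ring

section Fibers

variable {N N₁ N₂ N₃ R : ℝ} {Ω₀ : ℤ}

theorem SsetKK1_finite_and_ncard_le {k k₁ z : Fin 3 → ℤ} {M : ℝ} (hM : 1 ≤ M)
    (hz : ∀ q ∈ SsetKK1 N N₁ N₂ N₃ R Ω₀ k k₁, enorm3 (q.1 - z) ≤ M) :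
    (SsetKK1 N N₁ N₂ N₃ R Ω₀ k k₁).Finite ∧
      ((SsetKK1 N N₁ N₂ N₃ R Ω₀ k k₁).ncard : ℝ) ≤ 9 * M ^ 2 := by
  have hk₃ : ∀ q ∈ SsetKK1 N N₁ N₂ N₃ R Ω₀ k k₁, q.2 = q.1 + (k - k₁) := by
    rintro q ⟨hk, -⟩
    change k = k₁ - q.1 + q.2 at hk
    rw [hk]; abel
  rcases (SsetKK1 N N₁ N₂ N₃ R Ω₀ k k₁).eq_empty_or_nonempty with hS | ⟨q₀, hq₀⟩
  · simp only [hS, finite_empty, ncard_empty, Nat.cast_zero, true_and]; positivity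
  have hv : 2 • (k - k₁) ≠ 0 := by
    refine smul_ne_zero two_ne_zero (sub_ne_zero.mpr fun h => hq₀.2.2.1 ?_)
    rw [hk₃ q₀ hq₀, h, sub_self, add_zero]
  refine finite_and_ncard_le_of_injOn_plane (f := Prod.fst)
    (c := nsq3 k - nsq3 k₁ - nsq3 (k - k₁) - Ω₀) ?_ hv hM fun q hq => ⟨?_, hz q hq⟩
  · intro q hq q' hq' h
    exact Prod.ext h (by rw [hk₃ q hq, hk₃ q' hq', h])
  · obtain ⟨-, -, -, -, hΩ, -⟩ := id hq
    rw [hk₃ q hq] at hΩ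
    simp only [nsq3, Fin.sum_univ_three, Pi.add_apply, Pi.sub_apply, Pi.smul_apply] at hΩ ⊢
    linear_combination -hΩ

theorem SsetK2K3_finite_and_ncard_le {k₂ k₃ z : Fin 3 → ℤ} {M : ℝ} (hM : 1 ≤ M)
    (hz : ∀ q ∈ SsetK2K3 N N₁ N₂ N₃ R Ω₀ k₂ k₃, enorm3 (q.2 - z) ≤ M) :
    (SsetK2K3 N N₁ N₂ N₃ R Ω₀ k₂ k₃).Finite ∧
      ((SsetK2K3 N N₁ N₂ N₃ R Ω₀ k₂ k₃).ncard : ℝ) ≤ 9 * M ^ 2 := by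
  have hk : ∀ q ∈ SsetK2K3 N N₁ N₂ N₃ R Ω₀ k₂ k₃, q.1 = q.2 + (k₃ - k₂) := by
    rintro q ⟨hk, -⟩
    change q.1 = q.2 - k₂ + k₃ at hk
    rw [hk]; abel
  rcases (SsetK2K3 N N₁ N₂ N₃ R Ω₀ k₂ k₃).eq_empty_or_nonempty with hS | ⟨q₀, hq₀⟩
  · simp only [hS, finite_empty, ncard_empty, Nat.cast_zero, true_and]; positivity
  have hv : 2 • (k₃ - k₂) ≠ 0 :=
    smul_ne_zero two_ne_zero (sub_ne_zero.mpr (Ne.symm hq₀.2.2.1))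
  refine finite_and_ncard_le_of_injOn_plane (f := Prod.snd)
    (c := Ω₀ - nsq3 (k₃ - k₂) - nsq3 k₂ + nsq3 k₃) ?_ hv hM fun q hq => ⟨?_, hz q hq⟩
  · intro q hq q' hq' h
    exact Prod.ext (by rw [hk q hq, hk q' hq', h]) h
  · obtain ⟨-, -, -, -, hΩ, -⟩ := id hq
    rw [hk q hq] at hΩ
    simp only [nsq3, Fin.sum_univ_three, Pi.add_apply, Pi.sub_apply, Pi.smul_apply] at hΩ ⊢
    linear_combination hΩ

theorem SsetKK1_exists_center (k k₁ : Fin 3 → ℤ) :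
    ∃ z, ∀ q ∈ SsetKK1 N N₁ N₂ N₃ R Ω₀ k k₁, enorm3 (q.1 - z) ≤ min (min N₂ N₃) R := by
  let P M := ∃ z, ∀ q ∈ SsetKK1 N N₁ N₂ N₃ R Ω₀ k k₁, enorm3 (q.1 - z) ≤ M
  refine min_rec' P (min_rec' P ⟨0, fun q hq => ?_⟩ ⟨k₁ - k, fun q hq => ?_⟩)
    ⟨k₁, fun q hq => ?_⟩ <;>
  obtain ⟨hk, -, -, -, -, -, -, -, hN₂, -, hN₃, -, hR⟩ := hq <;>
  change k = k₁ - q.1 + q.2 at hk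
  · rwa [sub_zero]
  · rwa [show q.1 - (k₁ - k) = q.2 by rw [hk]; abel]
  · rw [enorm3_sub_comm]
    exact (enorm3_le_jap3 _).trans hR

theorem SsetK2K3_exists_center (k₂ k₃ : Fin 3 → ℤ) :
    ∃ z, ∀ q ∈ SsetK2K3 N N₁ N₂ N₃ R Ω₀ k₂ k₃, enorm3 (q.2 - z) ≤ min (min N N₁) R := by
  let P M := ∃ z, ∀ q ∈ SsetK2K3 N N₁ N₂ N₃ R Ω₀ k₂ k₃, enorm3 (q.2 - z) ≤ M
  refine min_rec' P (min_rec' P ⟨k₂ - k₃, fun q hq => ?_⟩ ⟨0, fun q hq => ?_⟩)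
    ⟨k₂, fun q hq => ?_⟩ <;>
  obtain ⟨hk, -, -, hN, -, -, hN₁, -, -, -, -, -, hR⟩ := hq <;>
  change q.1 = q.2 - k₂ + k₃ at hk
  · rwa [show q.2 - (k₂ - k₃) = q.1 by rw [hk]; abel]
  · rwa [sub_zero]
  · exact (enorm3_le_jap3 _).trans hR

end Fibers

theorem sq_le_rpow_two_add {x θ : ℝ} (hx : 1 ≤ x) (hθ : 0 ≤ θ) : x ^ 2 ≤ x ^ (2 + θ) := by
  rw [← Real.rpow_two]
  exact Real.rpow_le_rpow_of_exponent_le hx (by linarith)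

/-- Counting estimate (2.21) of Lemma 2.4(2): bounds on the fibers `S_{k k₁}` and `S_{k₂ k₃}`. -/
theorem counting_S_kk1_k2k3 :
    ∀ θ : ℝ, 0 < θ → ∃ C : ℝ, 0 < C ∧
      ∀ N N₁ N₂ N₃ R : ℝ, 1 ≤ N → 1 ≤ N₁ → 1 ≤ N₂ → 1 ≤ N₃ → 1 ≤ R → ∀ Ω₀ : ℤ,
        (∀ k k₁ : Fin 3 → ℤ,
          (SsetKK1 N N₁ N₂ N₃ R Ω₀ k k₁).Finite ∧
          ((SsetKK1 N N₁ N₂ N₃ R Ω₀ k k₁).ncard : ℝ) ≤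
            C * (min (min N₂ N₃) R) ^ (2 + θ)) ∧
        (∀ k₂ k₃ : Fin 3 → ℤ,
          (SsetK2K3 N N₁ N₂ N₃ R Ω₀ k₂ k₃).Finite ∧
          ((SsetK2K3 N N₁ N₂ N₃ R Ω₀ k₂ k₃).ncard : ℝ) ≤
            C * (min (min N N₁) R) ^ (2 + θ)) := by
  intro θ hθ
  refine ⟨9, by norm_num, fun N N₁ N₂ N₃ R hN hN₁ hN₂ hN₃ hR Ω₀ =>
    ⟨fun k k₁ => ?_, fun k₂ k₃ => ?_⟩⟩
  · obtain ⟨z, hz⟩ := SsetKK1_exists_center (N := N) (N₁ := N₁) (Ω₀ := Ω₀) k k₁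
    have hM : 1 ≤ min (min N₂ N₃) R := le_min (le_min hN₂ hN₃) hR
    obtain ⟨hfin, hcard⟩ := SsetKK1_finite_and_ncard_le hM hz
    exact ⟨hfin, hcard.trans (by gcongr; exact sq_le_rpow_two_add hM hθ.le)⟩
  · obtain ⟨z, hz⟩ := SsetK2K3_exists_center (N₂ := N₂) (N₃ := N₃) (Ω₀ := Ω₀) k₂ k₃
    have hM : 1 ≤ min (min N N₁) R := le_min (le_min hN hN₁) hR
    obtain ⟨hfin, hcard⟩ := SsetK2K3_finite_and_ncard_le hM hz
    exact ⟨hfin, hcard.trans (by gcongr; exact sq_le_rpow_two_add hM hθ.le)⟩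
end

section
/- Let A₁ and A₂ be finite index sets with A₁ ∩ A₂ = C, and let A = A₁ Δ A₂ be their symmetric difference. Let h⁽¹⁾ : (ℤ^d)^{A₁} → ℂ and h⁽²⁾ : (ℤ^d)^{A₂} → ℂ be finitely supported tensors, and define the semi-product H : (ℤ^d)^A → ℂ by H_{k_A} = ∑_{k_C} h⁽¹⁾_{k_{A₁}} h⁽²⁾_{k_{A₂}}. Then, for any partition (X, Y) of A, writing X₁ = X ∩ A₁, Y₁ = Y ∩ A₁, X₂ = X ∩ A₂, Y₂ = Y ∩ A₂, one has ‖H‖_{k_X → k_Y} ≤ ‖h⁽¹⁾‖_{k_{X₁ ∪ C} → k_{Y₁}} · ‖h⁽²⁾‖_{k_{X₂} → k_{C ∪ Y₂}}. -/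
open scoped BigOperators

noncomputable section

/-- Points of `(ℤ^d)`. -/
abbrev Vec (d : ℕ) := Fin d → ℤ

/-- Assignments `k_C = (k_j)_{j ∈ C}` of points of `ℤ^d` to the indices in a finite set `C`,
modelled as functions `ι → ℤ^d` vanishing outside `C`. -/
def Assign {ι : Type*} (d : ℕ) (C : Finset ι) : Type _ :=
  {k : ι → Vec d // ∀ i ∉ C, k i = 0}

/-- A tensor `h = h_{k_A}` depends only on the variables `k_j` with `j ∈ A`. -/
def TensorDependsOn {ι : Type*} {d : ℕ} (h : (ι → Vec d) → ℂ) (A : Finset ι) : Prop :=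
  ∀ k k' : ι → Vec d, (∀ i ∈ A, k i = k' i) → h k = h k'

/-- A tensor is finitely supported (as a function of the variables `k_A`). -/
def TensorFinSupp {ι : Type*} {d : ℕ} (h : (ι → Vec d) → ℂ) (A : Finset ι) : Prop :=
  (Function.support fun k : Assign d A => h k.1).Finite

/-- Restriction of an assignment to the coordinates in `A` (other coordinates set to `0`). -/
def proj {ι : Type*} [DecidableEq ι] {d : ℕ} (A : Finset ι) (k : ι → Vec d) : ι → Vec d :=
  fun i => if i ∈ A then k i else 0

/-- `K` is an admissible bound for the operator norm `‖h‖_{k_B → k_C}`: `K ≥ 0` and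
`∑_{k_C} |∑_{k_B} h_{k_A} z_{k_B}|² ≤ K² ∑_{k_B} |z_{k_B}|²` for every finitely supported `z`. -/
def IsOpBound {ι : Type*} {d : ℕ} (h : (ι → Vec d) → ℂ) (B C : Finset ι) (K : ℝ) : Prop :=
  0 ≤ K ∧ ∀ z : Assign d B → ℂ, (Function.support z).Finite →
    (∑' c : Assign d C, ‖∑' b : Assign d B, h (b.1 + c.1) * z b‖ ^ 2) ≤
      K ^ 2 * ∑' b : Assign d B, ‖z b‖ ^ 2

/-- The operator norm `‖h‖_{k_B → k_C}`: the smallest admissible bound. -/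
def tensorNorm {ι : Type*} {d : ℕ} (h : (ι → Vec d) → ℂ) (B C : Finset ι) : ℝ :=
  sInf {K : ℝ | IsOpBound h B C K}

/-!
The semi-product is a composite of two operators. Writing `k_X = (k_{X₁}, k_{X₂})`, first
`z ↦ w(k_{X₁}, k_C, k_{Y₂}) = ∑_{k_{X₂}} h²_{k_{A₂}} z_{k_X}` applies `h²` in the variables
`k_{X₂} → (k_C, k_{Y₂})` with `k_{X₁}` a spectator, and then `h¹` acts in the variables
`(k_{X₁}, k_C) → k_{Y₁}` with `k_{Y₂}` a spectator. Applying each operator bound fibrewise and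
summing over the spectator variables gives the product of the two norms. The norms are
attained: a finitely supported tensor has the Hilbert–Schmidt bound, and the set of admissible
bounds is closed.
-/

open Function
open scoped NNReal ENNReal

section KernelBound

variable {𝕜 : Type*} [NormedField 𝕜] {α β : Type*}

/-- The sums are taken in `ℝ≥0∞`, where they always exist and can be rearranged freely. -/
def KernelBound (T : β → α → 𝕜) (K : ℝ≥0) : Prop :=
  ∀ z : α → 𝕜, z.support.Finite →
    ∑' b, ‖∑' a, T b a * z a‖ₑ ^ 2 ≤ (K : ℝ≥0∞) ^ 2 * ∑' a, ‖z a‖ₑ ^ 2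

lemma exists_ne_zero_of_tsum_ne_zero {f : α → 𝕜} (h : ∑' a, f a ≠ 0) : ∃ a, f a ≠ 0 := by
  by_contra! hf
  exact h (by simp [hf])

lemma tsum_enorm_sq_ne_top {z : α → 𝕜} (hz : z.support.Finite) : ∑' a, ‖z a‖ₑ ^ 2 ≠ ∞ := by
  rw [tsum_eq_sum (s := hz.toFinset) fun a ha => by simp_all]
  exact ENNReal.sum_ne_top.2 fun _ _ => by finiteness

lemma tsum_enorm_sq_toReal (z : α → 𝕜) : (∑' a, ‖z a‖ₑ ^ 2).toReal = ∑' a, ‖z a‖ ^ 2 := by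
  rw [ENNReal.tsum_toReal_eq fun _ => by finiteness]
  simp

lemma finite_support_tsum_mul {T : β → α → 𝕜} (hT : (uncurry T).support.Finite) (z : α → 𝕜) :
    (fun b => ∑' a, T b a * z a).support.Finite :=
  (hT.image Prod.fst).subset fun b hb => by
    obtain ⟨a, ha⟩ := exists_ne_zero_of_tsum_ne_zero hb
    exact ⟨(b, a), left_ne_zero_of_mul ha, rfl⟩

lemma finite_support_uncurry_comp_equiv {α' β' : Type*} {T : β → α → 𝕜}
    (hT : (uncurry T).support.Finite) (e : α' ≃ α) (f : β' ≃ β) :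
    (uncurry fun b a => T (f b) (e a)).support.Finite := by
  rw [show uncurry (fun b a => T (f b) (e a)) = uncurry T ∘ Prod.map f e from rfl,
    support_comp_eq_preimage]
  exact hT.preimage (f.injective.prodMap e.injective).injOn

lemma enorm_tsum_mul_sq_le (f : α → 𝕜) {z : α → 𝕜} (hz : z.support.Finite) :
    ‖∑' a, f a * z a‖ₑ ^ 2 ≤ (∑' a, ‖f a‖ₑ ^ 2) * ∑' a, ‖z a‖ₑ ^ 2 := by
  set s := hz.toFinset
  rw [tsum_eq_sum (s := s) fun a ha => by simp_all [s]]
  calc ‖∑ a ∈ s, f a * z a‖ₑ ^ 2 ≤ (∑ a ∈ s, ‖f a‖ₑ * ‖z a‖ₑ) ^ 2 := by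
        gcongr
        exact (enorm_sum_le _ _).trans_eq (by simp_rw [enorm_mul])
    _ ≤ (∑ a ∈ s, ‖f a‖ₑ ^ 2) * ∑ a ∈ s, ‖z a‖ₑ ^ 2 := by
        simp only [enorm_eq_nnnorm, ← ENNReal.coe_pow, ← ENNReal.coe_mul,
          ← ENNReal.ofNNReal_finsetSum]
        exact ENNReal.coe_le_coe.2 (Finset.sum_mul_sq_le_sq_mul_sq s _ _)
    _ ≤ _ := by gcongr <;> exact ENNReal.sum_le_tsum s

lemma KernelBound.exists_of_finite_support {T : β → α → 𝕜} (hT : (uncurry T).support.Finite) :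
    ∃ K, KernelBound T K := by
  have hM : ∑' p, ‖uncurry T p‖ₑ ^ 2 ≠ ∞ := tsum_enorm_sq_ne_top hT
  refine ⟨NNReal.sqrt (∑' p, ‖uncurry T p‖ₑ ^ 2).toNNReal, fun z hz => ?_⟩
  calc ∑' b, ‖∑' a, T b a * z a‖ₑ ^ 2 ≤ ∑' b, (∑' a, ‖T b a‖ₑ ^ 2) * ∑' a, ‖z a‖ₑ ^ 2 :=
        ENNReal.tsum_le_tsum fun b => enorm_tsum_mul_sq_le _ hz
    _ = (∑' p, ‖uncurry T p‖ₑ ^ 2) * ∑' a, ‖z a‖ₑ ^ 2 := by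
        rw [ENNReal.tsum_mul_right, ENNReal.tsum_prod']; rfl
    _ = _ := by rw [← ENNReal.coe_pow, NNReal.sq_sqrt, ENNReal.coe_toNNReal hM]

lemma KernelBound.comp_equiv {α' β' : Type*} {T : β → α → 𝕜} {K : ℝ≥0} (hT : KernelBound T K)
    (e : α' ≃ α) (f : β' ≃ β) : KernelBound (fun b a => T (f b) (e a)) K := by
  intro z hz
  have hz' : (z ∘ e.symm).support.Finite := by
    rw [support_comp_eq_preimage]
    exact hz.preimage e.symm.injective.injOn
  have hinner : ∀ b, ∑' a, T (f b) (e a) * z a = ∑' a, T (f b) a * (z ∘ e.symm) a := fun b => by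
    simpa using e.tsum_eq fun a => T (f b) a * (z ∘ e.symm) a
  simp only [hinner]
  rw [f.tsum_eq fun b => ‖∑' a, T b a * (z ∘ e.symm) a‖ₑ ^ 2,
    ← e.symm.tsum_eq fun a => ‖z a‖ₑ ^ 2]
  exact hT _ hz'

end KernelBound

section Semiproduct

variable {𝕜 : Type*} [NormedField 𝕜] {X₁ X₂ C Y₁ Y₂ : Type*}

lemma tsum_prod_of_finite_support {α β : Type*} {F : α × β → 𝕜} (hF : F.support.Finite) :
    ∑' p, F p = ∑' a, ∑' b, F (a, b) :=
  (summable_of_hasFiniteSupport hF).tsum_prod' fun a =>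
    summable_of_hasFiniteSupport <| hF.preimage (Prod.mk_right_injective a).injOn

lemma tsum_semiproduct_mul {k₁ : Y₁ → X₁ × C → 𝕜} {k₂ : C × Y₂ → X₂ → 𝕜}
    (hk₂ : (uncurry k₂).support.Finite) {z : X₁ × X₂ → 𝕜} (hz : z.support.Finite)
    (y₁ : Y₁) (y₂ : Y₂) :
    ∑' x, (∑' c, k₁ y₁ (x.1, c) * k₂ (c, y₂) x.2) * z x =
      ∑' u, k₁ y₁ u * ∑' x₂, k₂ (u.2, y₂) x₂ * z (u.1, x₂) := by
  set F : (X₁ × X₂) × C → 𝕜 := fun p => k₁ y₁ (p.1.1, p.2) * (k₂ (p.2, y₂) p.1.2 * z p.1)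
  have hF : F.support.Finite := (hz.prod (hk₂.image fun q => q.1.1)).subset fun p hp => by
    have hk₂z := right_ne_zero_of_mul hp
    exact ⟨right_ne_zero_of_mul hk₂z, ((p.2, y₂), p.1.2), left_ne_zero_of_mul hk₂z, rfl⟩
  let e : (X₁ × C) × X₂ ≃ (X₁ × X₂) × C :=
    ⟨fun q => ((q.1.1, q.2), q.1.2), fun p => ((p.1.1, p.2), p.1.2), fun _ => rfl, fun _ => rfl⟩
  have hFe : (F ∘ e).support.Finite := by
    rw [support_comp_eq_preimage]
    exact hF.preimage e.injective.injOn
  calc ∑' x, (∑' c, k₁ y₁ (x.1, c) * k₂ (c, y₂) x.2) * z x = ∑' x, ∑' c, F (x, c) := by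
        simp_rw [← tsum_mul_right, mul_assoc]; rfl
    _ = ∑' q, F (e q) := by rw [← tsum_prod_of_finite_support hF, e.tsum_eq]
    _ = ∑' u, ∑' x₂, F (e (u, x₂)) := tsum_prod_of_finite_support hFe
    _ = _ := by simp_rw [← tsum_mul_left]; rfl

theorem KernelBound.semiproduct {k₁ : Y₁ → X₁ × C → 𝕜} {k₂ : C × Y₂ → X₂ → 𝕜} {K₁ K₂ : ℝ≥0}
    (hK₁ : KernelBound k₁ K₁) (hK₂ : KernelBound k₂ K₂) (hk₂ : (uncurry k₂).support.Finite) :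
    KernelBound (fun (y : Y₁ × Y₂) (x : X₁ × X₂) => ∑' c, k₁ y.1 (x.1, c) * k₂ (c, y.2) x.2)
      (K₁ * K₂) := by
  intro z hz
  set w : X₁ × C → Y₂ → 𝕜 := fun u y₂ => ∑' x₂, k₂ (u.2, y₂) x₂ * z (u.1, x₂)
  have hw : ∀ y₂, (fun u => w u y₂).support.Finite := fun y₂ =>
    ((hz.image fun x => x.1).prod (hk₂.image fun q => q.1.1)).subset fun u hu => by
      obtain ⟨x₂, hx₂⟩ := exists_ne_zero_of_tsum_ne_zero hu
      exact ⟨⟨(u.1, x₂), right_ne_zero_of_mul hx₂, rfl⟩,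
        ⟨((u.2, y₂), x₂), left_ne_zero_of_mul hx₂, rfl⟩⟩
  have hz₁ : ∀ x₁, (fun x₂ => z (x₁, x₂)).support.Finite := fun x₁ =>
    hz.preimage (Prod.mk_right_injective x₁).injOn
  calc ∑' y : Y₁ × Y₂, ‖∑' x : X₁ × X₂, (∑' c : C, k₁ y.1 (x.1, c) * k₂ (c, y.2) x.2) * z x‖ₑ ^ 2
      = ∑' y₂, ∑' y₁, ‖∑' u, k₁ y₁ u * w u y₂‖ₑ ^ 2 := by
        simp_rw [tsum_semiproduct_mul hk₂ hz]
        rw [ENNReal.tsum_prod', ENNReal.tsum_comm]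
    _ ≤ ∑' y₂, (K₁ : ℝ≥0∞) ^ 2 * ∑' u, ‖w u y₂‖ₑ ^ 2 :=
        ENNReal.tsum_le_tsum fun y₂ => hK₁ _ (hw y₂)
    _ = (K₁ : ℝ≥0∞) ^ 2 * ∑' x₁, ∑' v, ‖∑' x₂, k₂ v x₂ * z (x₁, x₂)‖ₑ ^ 2 := by
        rw [ENNReal.tsum_mul_left, ENNReal.tsum_comm, ENNReal.tsum_prod']
        simp_rw [ENNReal.tsum_prod', w]
    _ ≤ (K₁ : ℝ≥0∞) ^ 2 * ∑' x₁, (K₂ : ℝ≥0∞) ^ 2 * ∑' x₂, ‖z (x₁, x₂)‖ₑ ^ 2 := by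
        gcongr with x₁
        exact hK₂ _ (hz₁ x₁)
    _ = ((K₁ * K₂ : ℝ≥0) : ℝ≥0∞) ^ 2 * ∑' x, ‖z x‖ₑ ^ 2 := by
        rw [ENNReal.tsum_mul_left, ENNReal.tsum_prod']
        push_cast
        ring

end Semiproduct

section Tensor

variable {ι : Type*} {d : ℕ}

def tensorKernel (h : (ι → Vec d) → ℂ) (B C : Finset ι) : Assign d C → Assign d B → ℂ :=
  fun c b => h (b.1 + c.1)

lemma isOpBound_of_kernelBound {h : (ι → Vec d) → ℂ} {B C : Finset ι} {K : ℝ≥0}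
    (hK : KernelBound (tensorKernel h B C) K) : IsOpBound h B C K := by
  refine ⟨K.2, fun z hz => ?_⟩
  have := ENNReal.toReal_mono
    (ENNReal.mul_ne_top (by finiteness) (tsum_enorm_sq_ne_top hz)) (hK z hz)
  simpa [tsum_enorm_sq_toReal, tensorKernel] using this

lemma IsOpBound.kernelBound {h : (ι → Vec d) → ℂ} {B C : Finset ι} {K : ℝ}
    (hK : IsOpBound h B C K) (hfin : (uncurry (tensorKernel h B C)).support.Finite) :
    KernelBound (tensorKernel h B C) K.toNNReal := by
  intro z hz
  rw [← ENNReal.ofReal_toReal (tsum_enorm_sq_ne_top (finite_support_tsum_mul hfin z)),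
    ← ENNReal.ofReal_toReal (tsum_enorm_sq_ne_top hz), tsum_enorm_sq_toReal,
    tsum_enorm_sq_toReal, ENNReal.ofNNReal_toNNReal, ← ENNReal.ofReal_pow hK.1,
    ← ENNReal.ofReal_mul (sq_nonneg K)]
  exact ENNReal.ofReal_le_ofReal (hK.2 z hz)

lemma isClosed_setOf_isOpBound (h : (ι → Vec d) → ℂ) (B C : Finset ι) :
    IsClosed {K : ℝ | IsOpBound h B C K} := by
  simp only [IsOpBound, Set.ofPred_and, Set.ofPred_forall]
  exact isClosed_Ici.inter <| isClosed_iInter fun z => isClosed_iInter fun _ =>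
    isClosed_le continuous_const (by fun_prop)

variable [DecidableEq ι]

def Assign.split {B C D : Finset ι} (hBC : Disjoint B C) (hD : B ∪ C = D) :
    Assign d D ≃ Assign d B × Assign d C where
  toFun k := (⟨proj B k.1, fun _ hi => if_neg hi⟩, ⟨proj C k.1, fun _ hi => if_neg hi⟩)
  invFun p := ⟨p.1.1 + p.2.1, fun i hi => by
    subst hD
    simp only [Finset.mem_union, not_or] at hi
    simp [p.1.2 i hi.1, p.2.2 i hi.2]⟩
  left_inv k := Subtype.ext <| funext fun i => by
    subst hD
    by_cases hB : i ∈ B <;> by_cases hC : i ∈ C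
    · exact absurd hC (Finset.disjoint_left.1 hBC hB)
    all_goals simp [proj, hB, hC, k.2 i]
  right_inv p := by
    refine Prod.ext (Subtype.ext (funext fun i => ?_)) (Subtype.ext (funext fun i => ?_))
    · by_cases hB : i ∈ B
      · simp [proj, hB, p.2.2 i fun hC => Finset.disjoint_left.1 hBC hB hC]
      · simp [proj, hB, p.1.2 i hB]
    · by_cases hC : i ∈ C
      · simp [proj, hC, p.1.2 i fun hB => Finset.disjoint_left.1 hBC hB hC]
      · simp [proj, hC, p.2.2 i hC]

lemma TensorFinSupp.finite_support_tensorKernel {h : (ι → Vec d) → ℂ} {A B C : Finset ι}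
    (hh : TensorFinSupp h A) (hBC : Disjoint B C) (hA : B ∪ C = A) :
    (uncurry (tensorKernel h B C)).support.Finite :=
  (hh.image fun k => (Assign.split hBC hA k).swap).subset fun p hp =>
    ⟨(Assign.split hBC hA).symm p.swap, hp, by simp⟩

lemma TensorFinSupp.isOpBound_tensorNorm {h : (ι → Vec d) → ℂ} {A B C : Finset ι}
    (hh : TensorFinSupp h A) (hBC : Disjoint B C) (hA : B ∪ C = A) :
    IsOpBound h B C (tensorNorm h B C) := by
  obtain ⟨K, hK⟩ :=
    KernelBound.exists_of_finite_support (hh.finite_support_tensorKernel hBC hA)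
  exact (isClosed_setOf_isOpBound h B C).csInf_mem ⟨K, isOpBound_of_kernelBound hK⟩
    ⟨0, fun _ hK => hK.1⟩

lemma proj_eq_self {A : Finset ι} {k : ι → Vec d} (hk : ∀ i ∉ A, k i = 0) : proj A k = k :=
  funext fun i => by by_cases hi : i ∈ A <;> simp [proj, hi, hk]

lemma proj_inter_apply {X A : Finset ι} {i : ι} (hi : i ∈ A) (x : Assign d X) :
    proj (X ∩ A) x.1 i = x.1 i := by
  by_cases hX : i ∈ X <;> simp [proj, hi, hX, x.2 i]

lemma tensorKernel_eq_semiproduct {A₁ A₂ X Y : Finset ι} {h₁ h₂ H : (ι → Vec d) → ℂ}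
    (h₁dep : TensorDependsOn h₁ A₁) (h₂dep : TensorDependsOn h₂ A₂)
    (hH : ∀ k : ι → Vec d,
      H k = ∑' c : Assign d (A₁ ∩ A₂),
        h₁ (proj ((A₁ ∪ A₂) \ (A₁ ∩ A₂)) k + c.1) * h₂ (proj ((A₁ ∪ A₂) \ (A₁ ∩ A₂)) k + c.1))
    (hpart : X ∪ Y = (A₁ ∪ A₂) \ (A₁ ∩ A₂)) (y : Assign d Y) (x : Assign d X) :
    tensorKernel H X Y y x = ∑' c : Assign d (A₁ ∩ A₂),
      h₁ (proj (X ∩ A₁) x.1 + c.1 + proj (Y ∩ A₁) y.1) *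
        h₂ (proj (X ∩ A₂) x.1 + (c.1 + proj (Y ∩ A₂) y.1)) := by
  have hxy : proj ((A₁ ∪ A₂) \ (A₁ ∩ A₂)) (x.1 + y.1) = x.1 + y.1 := proj_eq_self fun i hi => by
    rw [← hpart, Finset.mem_union, not_or] at hi
    simp [x.2 i hi.1, y.2 i hi.2]
  refine (hH _).trans (tsum_congr fun c => ?_)
  rw [hxy]
  congr 1
  · refine h₁dep _ _ fun i hi => ?_
    simp only [Pi.add_apply, proj_inter_apply hi]
    abel
  · refine h₂dep _ _ fun i hi => ?_
    simp only [Pi.add_apply, proj_inter_apply hi]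
    abel

end Tensor

theorem semiproduct_bound_general {ι : Type*} [DecidableEq ι] {d : ℕ}
    (A₁ A₂ : Finset ι) (h₁ h₂ : (ι → Vec d) → ℂ)
    (h₁dep : TensorDependsOn h₁ A₁) (h₂dep : TensorDependsOn h₂ A₂)
    (h₁fin : TensorFinSupp h₁ A₁) (h₂fin : TensorFinSupp h₂ A₂)
    (H : (ι → Vec d) → ℂ)
    (hH : ∀ k : ι → Vec d,
      H k = ∑' c : Assign d (A₁ ∩ A₂),
        h₁ (proj ((A₁ ∪ A₂) \ (A₁ ∩ A₂)) k + c.1) * h₂ (proj ((A₁ ∪ A₂) \ (A₁ ∩ A₂)) k + c.1))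
    (X Y : Finset ι) (hdisj : Disjoint X Y) (hpart : X ∪ Y = (A₁ ∪ A₂) \ (A₁ ∩ A₂)) :
    tensorNorm H X Y ≤
      tensorNorm h₁ ((X ∩ A₁) ∪ (A₁ ∩ A₂)) (Y ∩ A₁) *
      tensorNorm h₂ (X ∩ A₂) ((A₁ ∩ A₂) ∪ (Y ∩ A₂)) := by
  have hmem : ∀ i, i ∈ X ∨ i ∈ Y ↔ (i ∈ A₁ ∨ i ∈ A₂) ∧ ¬(i ∈ A₁ ∧ i ∈ A₂) := by
    simpa [Finset.ext_iff] using hpart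
  have hXY : ∀ i ∈ X, i ∉ Y := fun i hi => Finset.disjoint_left.1 hdisj hi
  have hX : X ∩ A₁ ∪ X ∩ A₂ = X := by ext i; grind
  have hY : Y ∩ A₁ ∪ Y ∩ A₂ = Y := by ext i; grind
  have hA₁ : X ∩ A₁ ∪ A₁ ∩ A₂ ∪ Y ∩ A₁ = A₁ := by ext i; grind
  have hA₂ : X ∩ A₂ ∪ (A₁ ∩ A₂ ∪ Y ∩ A₂) = A₂ := by ext i; grind
  have hX₁X₂ : Disjoint (X ∩ A₁) (X ∩ A₂) := Finset.disjoint_left.2 fun i => by grind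
  have hY₁Y₂ : Disjoint (Y ∩ A₁) (Y ∩ A₂) := Finset.disjoint_left.2 fun i => by grind
  have hX₁C : Disjoint (X ∩ A₁) (A₁ ∩ A₂) := Finset.disjoint_left.2 fun i => by grind
  have hCY₂ : Disjoint (A₁ ∩ A₂) (Y ∩ A₂) := Finset.disjoint_left.2 fun i => by grind
  have hB₁ : Disjoint (X ∩ A₁ ∪ A₁ ∩ A₂) (Y ∩ A₁) := Finset.disjoint_left.2 fun i => by grind
  have hB₂ : Disjoint (X ∩ A₂) (A₁ ∩ A₂ ∪ Y ∩ A₂) := Finset.disjoint_left.2 fun i => by grind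
  have hb₁ := h₁fin.isOpBound_tensorNorm hB₁ hA₁
  have hb₂ := h₂fin.isOpBound_tensorNorm hB₂ hA₂
  have hfin₂ := h₂fin.finite_support_tensorKernel hB₂ hA₂
  have hK₁ := (hb₁.kernelBound (h₁fin.finite_support_tensorKernel hB₁ hA₁)).comp_equiv
    (Assign.split hX₁C rfl).symm (Equiv.refl _)
  have hK₂ := (hb₂.kernelBound hfin₂).comp_equiv (Equiv.refl _) (Assign.split hCY₂ rfl).symm
  have hKH := (hK₁.semiproduct hK₂ (finite_support_uncurry_comp_equiv hfin₂ _ _)).comp_equiv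
    (Assign.split hX₁X₂ hX) (Assign.split hY₁Y₂ hY)
  have hbH := isOpBound_of_kernelBound (h := H) (B := X) (C := Y) <| by
    rw [funext₂ (tensorKernel_eq_semiproduct h₁dep h₂dep hH hpart)]
    exact hKH
  calc tensorNorm H X Y ≤ _ := csInf_le ⟨0, fun _ hK => hK.1⟩ hbH
    _ = _ := by rw [NNReal.coe_mul, Real.coe_toNNReal _ hb₁.1, Real.coe_toNNReal _ hb₂.1]

/-- Proposition 2.5 (Proposition 4.11 of [19]): the semi-product
`H_{k_A} = ∑_{k_C} h¹_{k_{A₁}} h²_{k_{A₂}}` (with `C = A₁ ∩ A₂`, `A = A₁ Δ A₂`) satisfies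
`‖H‖_{k_X → k_Y} ≤ ‖h¹‖_{k_{X₁∪C} → k_{Y₁}} ‖h²‖_{k_{X₂} → k_{C∪Y₂}}` for any partition
`(X, Y)` of `A`. -/
theorem semiproduct_bound {ι : Type*} [DecidableEq ι] {d : ℕ} (hd : 1 ≤ d)
    (A₁ A₂ : Finset ι) (h₁ h₂ : (ι → Vec d) → ℂ)
    (h₁dep : TensorDependsOn h₁ A₁) (h₂dep : TensorDependsOn h₂ A₂)
    (h₁fin : TensorFinSupp h₁ A₁) (h₂fin : TensorFinSupp h₂ A₂)
    (H : (ι → Vec d) → ℂ)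
    (hH : ∀ k : ι → Vec d,
      H k = ∑' c : Assign d (A₁ ∩ A₂),
        h₁ (proj ((A₁ ∪ A₂) \ (A₁ ∩ A₂)) k + c.1) * h₂ (proj ((A₁ ∪ A₂) \ (A₁ ∩ A₂)) k + c.1))
    (X Y : Finset ι) (hdisj : Disjoint X Y) (hpart : X ∪ Y = (A₁ ∪ A₂) \ (A₁ ∩ A₂)) :
    tensorNorm H X Y ≤
      tensorNorm h₁ ((X ∩ A₁) ∪ (A₁ ∩ A₂)) (Y ∩ A₁) *
      tensorNorm h₂ (X ∩ A₂) ((A₁ ∩ A₂) ∪ (Y ∩ A₂)) :=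
  semiproduct_bound_general A₁ A₂ h₁ h₂ h₁dep h₂dep h₁fin h₂fin H hH X Y hdisj hpart
end
end

section
/- For every κ ≥ 0 there exists a constant C_κ > 0 with the following property. Let L ≥ 1 be real, and let h⁽¹⁾, h⁽²⁾ : ℤ³ × ℤ³ → ℂ be finitely supported matrices such that h⁽¹⁾_{k k'} = 0 whenever |k − k'| > L. Define h_{k k''} = ∑_{k' ∈ ℤ³} h⁽¹⁾_{k k'} h⁽²⁾_{k' k''}. Then ( ∑_{k, k''} (1 + |k − k''|/L)^{2κ} |h_{k k''}|² )^{1/2} ≤ C_κ · ‖h⁽¹⁾‖_{op} · ( ∑_{k', k''} (1 + |k' − k''|/L)^{2κ} |h⁽²⁾_{k' k''}|² )^{1/2}, where ‖h⁽¹⁾‖_{op} is the operator norm of h⁽¹⁾ acting on ℓ²(ℤ³). -/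
open scoped BigOperators

noncomputable section

/-- Euclidean distance between two points of `ℤ³`. -/
def dist3 (k k' : Fin 3 → ℤ) : ℝ := Real.sqrt (∑ i, (((k i - k' i : ℤ)) : ℝ) ^ 2)

/-- The operator norm of a matrix `h = h_{k k'}` acting on `ℓ²(ℤ³)`: the smallest `K ≥ 0`
such that `∑_k |∑_{k'} h_{k k'} z_{k'}|² ≤ K² ∑_{k'} |z_{k'}|²` for all finitely supported `z`. -/
def matOpNorm (h : (Fin 3 → ℤ) → (Fin 3 → ℤ) → ℂ) : ℝ :=
  sInf {K : ℝ | 0 ≤ K ∧ ∀ z : (Fin 3 → ℤ) → ℂ, (Function.support z).Finite →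
    (∑' k : Fin 3 → ℤ, ‖∑' k' : Fin 3 → ℤ, h k k' * z k'‖ ^ 2) ≤
      K ^ 2 * ∑' k' : Fin 3 → ℤ, ‖z k'‖ ^ 2}

lemma dist3_nonneg (a b : Fin 3 → ℤ) : 0 ≤ dist3 a b := Real.sqrt_nonneg _

lemma dist3_comm (a b : Fin 3 → ℤ) : dist3 a b = dist3 b a := by
  unfold dist3
  congr 1
  apply Finset.sum_congr rfl
  intro i _
  push_cast
  ring

lemma dist3_triangle (a b c : Fin 3 → ℤ) : dist3 a c ≤ dist3 a b + dist3 b c := by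
  unfold dist3
  set x : Fin 3 → ℝ := fun i => ((a i - b i : ℤ) : ℝ) with hx
  set y : Fin 3 → ℝ := fun i => ((b i - c i : ℤ) : ℝ) with hy
  have hX : (0:ℝ) ≤ ∑ i, x i ^ 2 := by positivity
  have hY : (0:ℝ) ≤ ∑ i, y i ^ 2 := by positivity
  have hcs' : ∑ i, x i * y i ≤ Real.sqrt (∑ i, x i ^ 2) * Real.sqrt (∑ i, y i ^ 2) :=
    Real.sum_mul_le_sqrt_mul_sqrt Finset.univ x y
  have hexp : ∑ i, ((a i - c i : ℤ) : ℝ) ^ 2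
      = ∑ i, x i ^ 2 + 2 * (∑ i, x i * y i) + ∑ i, y i ^ 2 := by
    rw [Finset.mul_sum, ← Finset.sum_add_distrib, ← Finset.sum_add_distrib]
    apply Finset.sum_congr rfl
    intro i _
    simp only [hx, hy]
    push_cast
    ring
  have hle : ∑ i, ((a i - c i : ℤ) : ℝ) ^ 2
      ≤ (Real.sqrt (∑ i, x i ^ 2) + Real.sqrt (∑ i, y i ^ 2)) ^ 2 := by
    rw [hexp]
    nlinarith [Real.sq_sqrt hX, Real.sq_sqrt hY]
  calc Real.sqrt (∑ i, ((a i - c i : ℤ) : ℝ) ^ 2)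
      ≤ Real.sqrt ((Real.sqrt (∑ i, x i ^ 2) + Real.sqrt (∑ i, y i ^ 2)) ^ 2) :=
        Real.sqrt_le_sqrt hle
    _ = Real.sqrt (∑ i, x i ^ 2) + Real.sqrt (∑ i, y i ^ 2) :=
        Real.sqrt_sq (by positivity)

lemma hs_bound (h₁ : (Fin 3 → ℤ) → (Fin 3 → ℤ) → ℂ) (z : (Fin 3 → ℤ) → ℂ)
    (Kf Z : Finset (Fin 3 → ℤ)) (S₁ : Finset ((Fin 3 → ℤ) × (Fin 3 → ℤ)))
    (h₁zero : ∀ k, k ∉ Kf → ∀ k', h₁ k k' = 0)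
    (h₁zero' : ∀ p : (Fin 3 → ℤ) × (Fin 3 → ℤ), p ∉ S₁ → h₁ p.1 p.2 = 0)
    (hzz : ∀ k', k' ∉ Z → z k' = 0) :
    (∑' k : Fin 3 → ℤ, ‖∑' k' : Fin 3 → ℤ, h₁ k k' * z k'‖ ^ 2) ≤
      (∑ p ∈ S₁, ‖h₁ p.1 p.2‖ ^ 2) * ∑' k' : Fin 3 → ℤ, ‖z k'‖ ^ 2 := by
  classical
  have hinner : ∀ k, (∑' k', h₁ k k' * z k') = ∑ k' ∈ Z, h₁ k k' * z k' := by
    intro k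
    exact tsum_eq_sum (fun k' hk' => by rw [hzz k' hk', mul_zero])
  have houter : (∑' k, ‖∑' k', h₁ k k' * z k'‖ ^ 2)
      = ∑ k ∈ Kf, ‖∑' k', h₁ k k' * z k'‖ ^ 2 := by
    refine tsum_eq_sum (fun k hk => ?_)
    have : (fun k' => h₁ k k' * z k') = fun _ => 0 := by
      funext k'; rw [h₁zero k hk k', zero_mul]
    rw [this, tsum_zero]
    simp
  have hzsum : (∑' k', ‖z k'‖ ^ 2) = ∑ k' ∈ Z, ‖z k'‖ ^ 2 :=
    tsum_eq_sum (fun k' hk' => by rw [hzz k' hk']; simp)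
  rw [houter, hzsum]
  have hperk : ∀ k, ‖∑' k', h₁ k k' * z k'‖ ^ 2
      ≤ (∑ k' ∈ Z, ‖h₁ k k'‖ ^ 2) * ∑ k' ∈ Z, ‖z k'‖ ^ 2 := by
    intro k
    rw [hinner k]
    have h1 : ‖∑ k' ∈ Z, h₁ k k' * z k'‖ ≤ ∑ k' ∈ Z, ‖h₁ k k'‖ * ‖z k'‖ := by
      refine (norm_sum_le _ _).trans ?_
      apply Finset.sum_le_sum
      intro k' _
      rw [norm_mul]
    calc ‖∑ k' ∈ Z, h₁ k k' * z k'‖ ^ 2 ≤ (∑ k' ∈ Z, ‖h₁ k k'‖ * ‖z k'‖) ^ 2 :=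
          pow_le_pow_left₀ (norm_nonneg _) h1 2
      _ ≤ _ := Finset.sum_mul_sq_le_sq_mul_sq Z _ _
  have hHS : (∑ k ∈ Kf, ∑ k' ∈ Z, ‖h₁ k k'‖ ^ 2) ≤ ∑ p ∈ S₁, ‖h₁ p.1 p.2‖ ^ 2 := by
    rw [← Finset.sum_product']
    calc ∑ p ∈ Kf ×ˢ Z, ‖h₁ p.1 p.2‖ ^ 2
        ≤ ∑ p ∈ Kf ×ˢ Z ∪ S₁, ‖h₁ p.1 p.2‖ ^ 2 :=
          Finset.sum_le_sum_of_subset_of_nonneg Finset.subset_union_left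
            (fun p _ _ => by positivity)
      _ = ∑ p ∈ S₁, ‖h₁ p.1 p.2‖ ^ 2 := by
          refine (Finset.sum_subset Finset.subset_union_right (fun p _ hp => ?_)).symm
          rw [h₁zero' p hp]
          simp
  calc ∑ k ∈ Kf, ‖∑' k', h₁ k k' * z k'‖ ^ 2
      ≤ ∑ k ∈ Kf, (∑ k' ∈ Z, ‖h₁ k k'‖ ^ 2) * ∑ k' ∈ Z, ‖z k'‖ ^ 2 :=
        Finset.sum_le_sum (fun k _ => hperk k)
    _ = (∑ k ∈ Kf, ∑ k' ∈ Z, ‖h₁ k k'‖ ^ 2) * ∑ k' ∈ Z, ‖z k'‖ ^ 2 :=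
        (Finset.sum_mul _ _ _).symm
    _ ≤ (∑ p ∈ S₁, ‖h₁ p.1 p.2‖ ^ 2) * ∑ k' ∈ Z, ‖z k'‖ ^ 2 :=
        mul_le_mul_of_nonneg_right hHS (by positivity)

lemma matOpNorm_mem (h₁ : (Fin 3 → ℤ) → (Fin 3 → ℤ) → ℂ)
    (hf : (Function.support fun p : (Fin 3 → ℤ) × (Fin 3 → ℤ) => h₁ p.1 p.2).Finite) :
    0 ≤ matOpNorm h₁ ∧ ∀ z : (Fin 3 → ℤ) → ℂ, (Function.support z).Finite →
      (∑' k : Fin 3 → ℤ, ‖∑' k' : Fin 3 → ℤ, h₁ k k' * z k'‖ ^ 2) ≤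
        (matOpNorm h₁) ^ 2 * ∑' k' : Fin 3 → ℤ, ‖z k'‖ ^ 2 := by
  classical
  have hB : BddBelow {K : ℝ | 0 ≤ K ∧ ∀ z : (Fin 3 → ℤ) → ℂ, (Function.support z).Finite →
      (∑' k : Fin 3 → ℤ, ‖∑' k' : Fin 3 → ℤ, h₁ k k' * z k'‖ ^ 2) ≤
        K ^ 2 * ∑' k' : Fin 3 → ℤ, ‖z k'‖ ^ 2} := ⟨0, fun K hK => hK.1⟩
  have hne : Set.Nonempty {K : ℝ | 0 ≤ K ∧ ∀ z : (Fin 3 → ℤ) → ℂ, (Function.support z).Finite →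
      (∑' k : Fin 3 → ℤ, ‖∑' k' : Fin 3 → ℤ, h₁ k k' * z k'‖ ^ 2) ≤
        K ^ 2 * ∑' k' : Fin 3 → ℤ, ‖z k'‖ ^ 2} := by
    refine ⟨Real.sqrt (∑ p ∈ hf.toFinset, ‖h₁ p.1 p.2‖ ^ 2), Real.sqrt_nonneg _, ?_⟩
    intro z hz
    have hsq : Real.sqrt (∑ p ∈ hf.toFinset, ‖h₁ p.1 p.2‖ ^ 2) ^ 2
        = ∑ p ∈ hf.toFinset, ‖h₁ p.1 p.2‖ ^ 2 := Real.sq_sqrt (by positivity)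
    rw [hsq]
    refine hs_bound h₁ z (hf.toFinset.image Prod.fst) hz.toFinset hf.toFinset ?_ ?_ ?_
    · intro k hk k'
      by_contra hne'
      exact hk (Finset.mem_image.2 ⟨(k, k'), hf.mem_toFinset.2 hne', rfl⟩)
    · intro p hp
      by_contra hne'
      exact hp (hf.mem_toFinset.2 hne')
    · intro k' hk'
      by_contra hne'
      exact hk' (hz.mem_toFinset.2 hne')
  have hcl : IsClosed {K : ℝ | 0 ≤ K ∧ ∀ z : (Fin 3 → ℤ) → ℂ, (Function.support z).Finite →
      (∑' k : Fin 3 → ℤ, ‖∑' k' : Fin 3 → ℤ, h₁ k k' * z k'‖ ^ 2) ≤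
        K ^ 2 * ∑' k' : Fin 3 → ℤ, ‖z k'‖ ^ 2} := by
    have heq : {K : ℝ | 0 ≤ K ∧ ∀ z : (Fin 3 → ℤ) → ℂ, (Function.support z).Finite →
        (∑' k : Fin 3 → ℤ, ‖∑' k' : Fin 3 → ℤ, h₁ k k' * z k'‖ ^ 2) ≤
          K ^ 2 * ∑' k' : Fin 3 → ℤ, ‖z k'‖ ^ 2}
        = {K : ℝ | 0 ≤ K} ∩ ⋂ (z : (Fin 3 → ℤ) → ℂ) (_ : (Function.support z).Finite),
          {K : ℝ | (∑' k : Fin 3 → ℤ, ‖∑' k' : Fin 3 → ℤ, h₁ k k' * z k'‖ ^ 2) ≤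
            K ^ 2 * ∑' k' : Fin 3 → ℤ, ‖z k'‖ ^ 2} := by
      ext K
      simp only [Set.mem_setOf_eq, Set.mem_inter_iff, Set.mem_iInter]
    rw [heq]
    refine IsClosed.inter (isClosed_le continuous_const continuous_id) ?_
    refine isClosed_iInter (fun z => isClosed_iInter (fun _ => ?_))
    exact isClosed_le continuous_const ((continuous_pow 2).mul continuous_const)
  have hmem := hcl.csInf_mem hne hB
  exact ⟨hmem.1, hmem.2⟩

def jdx (L : ℝ) (k'' a : Fin 3 → ℤ) : ℕ := ⌊Real.logb 2 (1 + dist3 a k'' / L)⌋₊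

lemma one_le_wbase {L : ℝ} (hL : 0 < L) (a k'' : Fin 3 → ℤ) :
    (1:ℝ) ≤ 1 + dist3 a k'' / L :=
  le_add_of_nonneg_right (div_nonneg (dist3_nonneg a k'') hL.le)

lemma two_pow_jdx_le {L : ℝ} (hL : 0 < L) (k'' a : Fin 3 → ℤ) :
    (2:ℝ) ^ jdx L k'' a ≤ 1 + dist3 a k'' / L := by
  have hb : (1:ℝ) ≤ 1 + dist3 a k'' / L := one_le_wbase hL a k''
  have h0 : (0:ℝ) < 1 + dist3 a k'' / L := lt_of_lt_of_le one_pos hb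
  have hlog : ((jdx L k'' a : ℕ) : ℝ) ≤ Real.logb 2 (1 + dist3 a k'' / L) :=
    Nat.floor_le (Real.logb_nonneg one_lt_two hb)
  calc (2:ℝ) ^ jdx L k'' a = (2:ℝ) ^ ((jdx L k'' a : ℕ) : ℝ) :=
        (Real.rpow_natCast 2 _).symm
    _ ≤ (2:ℝ) ^ Real.logb 2 (1 + dist3 a k'' / L) :=
        Real.rpow_le_rpow_of_exponent_le one_le_two hlog
    _ = 1 + dist3 a k'' / L := Real.rpow_logb two_pos (by norm_num) h0

lemma lt_two_pow_jdx {L : ℝ} (hL : 0 < L) (k'' a : Fin 3 → ℤ) :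
    1 + dist3 a k'' / L < (2:ℝ) ^ (jdx L k'' a + 1) := by
  have hb : (1:ℝ) ≤ 1 + dist3 a k'' / L := one_le_wbase hL a k''
  have h0 : (0:ℝ) < 1 + dist3 a k'' / L := lt_of_lt_of_le one_pos hb
  have hlog : Real.logb 2 (1 + dist3 a k'' / L) < ((jdx L k'' a + 1 : ℕ) : ℝ) := by
    push_cast
    exact Nat.lt_floor_add_one _
  calc 1 + dist3 a k'' / L = (2:ℝ) ^ Real.logb 2 (1 + dist3 a k'' / L) :=
        (Real.rpow_logb two_pos (by norm_num) h0).symm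
    _ < (2:ℝ) ^ ((jdx L k'' a + 1 : ℕ) : ℝ) :=
        Real.rpow_lt_rpow_of_exponent_lt one_lt_two hlog
    _ = (2:ℝ) ^ (jdx L k'' a + 1) := Real.rpow_natCast 2 _

def zW (L : ℝ) (k'' : Fin 3 → ℤ) (h₂ : (Fin 3 → ℤ) → (Fin 3 → ℤ) → ℂ) (j : ℕ) :
    (Fin 3 → ℤ) → ℂ := fun k' => if jdx L k'' k' = j then h₂ k' k'' else 0

def gW (L : ℝ) (k'' : Fin 3 → ℤ) (h₁ h₂ : (Fin 3 → ℤ) → (Fin 3 → ℤ) → ℂ) (j : ℕ) :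
    (Fin 3 → ℤ) → ℂ := fun k => ∑' k', h₁ k k' * zW L k'' h₂ j k'

lemma pow_succ_add_one_le {j : ℕ} : (2:ℝ) ^ (j + 1) + 1 ≤ (2:ℝ) ^ (j + 2) := by
  have h1 : (1:ℝ) ≤ 2 ^ (j + 1) := one_le_pow₀ one_le_two
  have : (2:ℝ) ^ (j + 2) = 2 ^ (j + 1) + 2 ^ (j + 1) := by ring
  linarith

lemma hcmp {L : ℝ} (hL : 0 < L) (k'' : Fin 3 → ℤ)
    (h₁ h₂ : (Fin 3 → ℤ) → (Fin 3 → ℤ) → ℂ)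
    (hnear : ∀ k k', h₁ k k' ≠ 0 → dist3 k k' ≤ L)
    {k k' : Fin 3 → ℤ} {j : ℕ} (h1 : h₁ k k' ≠ 0) (hzj : zW L k'' h₂ j k' ≠ 0) :
    1 + dist3 k k'' / L < (2:ℝ) ^ (j + 2) ∧ jdx L k'' k ≤ j + 1 ∧ j ≤ jdx L k'' k + 1 := by
  have hjj : jdx L k'' k' = j := by
    by_contra hne
    simp only [zW, if_neg hne] at hzj
    exact hzj rfl
  have hd : dist3 k k' ≤ L := hnear _ _ h1
  have t1 : dist3 k k'' ≤ dist3 k' k'' + L := by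
    have := dist3_triangle k k' k''
    linarith
  have t2 : dist3 k' k'' ≤ dist3 k k'' + L := by
    have h := dist3_triangle k' k k''
    rw [dist3_comm k' k] at h
    linarith
  have hu : 1 + dist3 k k'' / L ≤ (1 + dist3 k' k'' / L) + 1 := by
    have : dist3 k k'' / L ≤ (dist3 k' k'' + L) / L := by
      apply div_le_div_of_nonneg_right t1 hL.le
    rw [add_div, div_self hL.ne'] at this
    linarith
  have hv : 1 + dist3 k' k'' / L ≤ (1 + dist3 k k'' / L) + 1 := by
    have : dist3 k' k'' / L ≤ (dist3 k k'' + L) / L := by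
      apply div_le_div_of_nonneg_right t2 hL.le
    rw [add_div, div_self hL.ne'] at this
    linarith
  have hvlt : 1 + dist3 k' k'' / L < (2:ℝ) ^ (j + 1) := hjj ▸ lt_two_pow_jdx hL k'' k'
  have hvge : (2:ℝ) ^ j ≤ 1 + dist3 k' k'' / L := hjj ▸ two_pow_jdx_le hL k'' k'
  have hmain : 1 + dist3 k k'' / L < (2:ℝ) ^ (j + 2) := by
    calc 1 + dist3 k k'' / L ≤ (1 + dist3 k' k'' / L) + 1 := hu
      _ < (2:ℝ) ^ (j + 1) + 1 := by linarith
      _ ≤ (2:ℝ) ^ (j + 2) := pow_succ_add_one_le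
  refine ⟨hmain, ?_, ?_⟩
  · have h2p : (2:ℝ) ^ jdx L k'' k < 2 ^ (j + 2) :=
      lt_of_le_of_lt (two_pow_jdx_le hL k'' k) hmain
    have := (pow_lt_pow_iff_right₀ one_lt_two).1 h2p
    omega
  · have hult : 1 + dist3 k k'' / L < (2:ℝ) ^ (jdx L k'' k + 1) := lt_two_pow_jdx hL k'' k
    have h2p : (2:ℝ) ^ j < 2 ^ (jdx L k'' k + 2) := by
      calc (2:ℝ) ^ j ≤ 1 + dist3 k' k'' / L := hvge
        _ ≤ (1 + dist3 k k'' / L) + 1 := hv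
        _ < (2:ℝ) ^ (jdx L k'' k + 1) + 1 := by linarith
        _ ≤ (2:ℝ) ^ (jdx L k'' k + 2) := pow_succ_add_one_le
    have := (pow_lt_pow_iff_right₀ one_lt_two).1 h2p
    omega

lemma hdecomp {L : ℝ} (hL : 0 < L) (k'' : Fin 3 → ℤ)
    (h₁ h₂ : (Fin 3 → ℤ) → (Fin 3 → ℤ) → ℂ) (K'f : Finset (Fin 3 → ℤ))
    (h₂zero : ∀ k', k' ∉ K'f → h₂ k' k'' = 0)
    (hnear : ∀ k k', h₁ k k' ≠ 0 → dist3 k k' ≤ L)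
    (k : Fin 3 → ℤ) :
    (∑' k', h₁ k k' * h₂ k' k'')
      = ∑ j ∈ ({jdx L k'' k - 1, jdx L k'' k, jdx L k'' k + 1} : Finset ℕ),
          gW L k'' h₁ h₂ j k := by
  classical
  have hsummable : ∀ j ∈ ({jdx L k'' k - 1, jdx L k'' k, jdx L k'' k + 1} : Finset ℕ),
      Summable (fun k' => h₁ k k' * zW L k'' h₂ j k') := by
    intro j _
    apply summable_of_ne_finset_zero (s := K'f)
    intro k' hk'
    have : zW L k'' h₂ j k' = 0 := by
      simp only [zW, h₂zero k' hk', ite_self]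
    rw [this, mul_zero]
  rw [show (∑ j ∈ ({jdx L k'' k - 1, jdx L k'' k, jdx L k'' k + 1} : Finset ℕ),
      gW L k'' h₁ h₂ j k)
      = ∑' k', ∑ j ∈ ({jdx L k'' k - 1, jdx L k'' k, jdx L k'' k + 1} : Finset ℕ),
          h₁ k k' * zW L k'' h₂ j k' from (Summable.tsum_finsetSum hsummable).symm]
  refine tsum_congr fun k' => ?_
  by_cases h1 : h₁ k k' = 0
  · simp [h1]
  by_cases h2 : h₂ k' k'' = 0
  · have : ∀ j, zW L k'' h₂ j k' = 0 := fun j => by simp [zW, h2]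
    simp [this, h2]
  · have hzne : zW L k'' h₂ (jdx L k'' k') k' ≠ 0 := by
      simp only [zW, if_pos rfl]
      exact h2
    obtain ⟨-, hj1, hj2⟩ := hcmp hL k'' h₁ h₂ hnear h1 hzne
    have hmem : jdx L k'' k' ∈ ({jdx L k'' k - 1, jdx L k'' k, jdx L k'' k + 1} : Finset ℕ) := by
      simp only [Finset.mem_insert, Finset.mem_singleton]
      omega
    have : ∀ j, h₁ k k' * zW L k'' h₂ j k'
        = if jdx L k'' k' = j then h₁ k k' * h₂ k' k'' else 0 := by
      intro j
      simp only [zW, mul_ite, mul_zero]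
    simp only [this]
    rw [Finset.sum_ite_eq, if_pos hmem]

lemma key_estimate {κ L : ℝ} (hκ : 0 ≤ κ) (hL : 1 ≤ L)
    (h₁ h₂ h : (Fin 3 → ℤ) → (Fin 3 → ℤ) → ℂ) (k'' : Fin 3 → ℤ) (K : ℝ)
    (hKop : ∀ z : (Fin 3 → ℤ) → ℂ, (Function.support z).Finite →
      (∑' k : Fin 3 → ℤ, ‖∑' k' : Fin 3 → ℤ, h₁ k k' * z k'‖ ^ 2) ≤
        K ^ 2 * ∑' k' : Fin 3 → ℤ, ‖z k'‖ ^ 2)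
    (Kf K'f : Finset (Fin 3 → ℤ))
    (h₁zero : ∀ k, k ∉ Kf → ∀ k', h₁ k k' = 0)
    (h₂zero : ∀ k', k' ∉ K'f → h₂ k' k'' = 0)
    (hnear : ∀ k k', h₁ k k' ≠ 0 → dist3 k k' ≤ L)
    (hdef : ∀ k, h k k'' = ∑' k', h₁ k k' * h₂ k' k'') :
    ∑ k ∈ Kf, (1 + dist3 k k'' / L) ^ (2 * κ) * ‖h k k''‖ ^ 2 ≤
      3 * 16 ^ κ * K ^ 2 *
        ∑ k' ∈ K'f, (1 + dist3 k' k'' / L) ^ (2 * κ) * ‖h₂ k' k''‖ ^ 2 := by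
  classical
  have hL0 : (0:ℝ) < L := lt_of_lt_of_le one_pos hL
  have h2κ : (0:ℝ) ≤ 2 * κ := by linarith
  set N : ℕ := ((Kf ∪ K'f).sup (jdx L k'')) + 2 with hN
  -- gW vanishes off Kf
  have hgzero : ∀ j k, k ∉ Kf → gW L k'' h₁ h₂ j k = 0 := by
    intro j k hk
    simp only [gW]
    have : (fun k' => h₁ k k' * zW L k'' h₂ j k') = fun _ => 0 := by
      funext k'
      rw [h₁zero k hk k', zero_mul]
    rw [this, tsum_zero]
  -- weight bound on the support of gW
  have hgne : ∀ j k, gW L k'' h₁ h₂ j k ≠ 0 → 1 + dist3 k k'' / L < (2:ℝ) ^ (j + 2) := by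
    intro j k hg
    have hex : ∃ k', h₁ k k' * zW L k'' h₂ j k' ≠ 0 := by
      by_contra hno
      push_neg at hno
      apply hg
      simp only [gW]
      have : (fun k' => h₁ k k' * zW L k'' h₂ j k') = fun _ => 0 := funext hno
      rw [this, tsum_zero]
    obtain ⟨k', hk'⟩ := hex
    exact (hcmp hL0 k'' h₁ h₂ hnear (left_ne_zero_of_mul hk') (right_ne_zero_of_mul hk')).1
  -- zW has finite support
  have hzsupp : ∀ j, (Function.support (zW L k'' h₂ j)).Finite := by
    intro j
    refine Set.Finite.subset K'f.finite_toSet fun k' hk' => ?_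
    by_contra hnm
    exact (Function.mem_support.1 hk') (by simp [zW, h₂zero k' hnm])
  -- pointwise bound via the decomposition
  have hstep12 : ∀ k, (1 + dist3 k k'' / L) ^ (2 * κ) * ‖h k k''‖ ^ 2 ≤
      3 * ∑ j ∈ ({jdx L k'' k - 1, jdx L k'' k, jdx L k'' k + 1} : Finset ℕ),
        ((2:ℝ) ^ (j + 2)) ^ (2 * κ) * ‖gW L k'' h₁ h₂ j k‖ ^ 2 := by
    intro k
    have hdk := hdecomp hL0 k'' h₁ h₂ K'f h₂zero hnear k
    have hw0 : (0:ℝ) ≤ (1 + dist3 k k'' / L) ^ (2 * κ) :=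
      Real.rpow_nonneg (le_trans zero_le_one (one_le_wbase hL0 k k'')) _
    have hns : ‖h k k''‖ ≤ ∑ j ∈ ({jdx L k'' k - 1, jdx L k'' k, jdx L k'' k + 1} : Finset ℕ),
        ‖gW L k'' h₁ h₂ j k‖ := by
      rw [hdef k, hdk]
      exact norm_sum_le _ _
    have hcard : (({jdx L k'' k - 1, jdx L k'' k, jdx L k'' k + 1} : Finset ℕ)).card ≤ 3 := by
      calc (({jdx L k'' k - 1, jdx L k'' k, jdx L k'' k + 1} : Finset ℕ)).card
          ≤ (({jdx L k'' k, jdx L k'' k + 1} : Finset ℕ)).card + 1 := Finset.card_insert_le _ _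
        _ ≤ ((({jdx L k'' k + 1} : Finset ℕ)).card + 1) + 1 :=
            Nat.add_le_add_right (Finset.card_insert_le _ _) 1
        _ = 3 := by simp
    have hsq : ‖h k k''‖ ^ 2 ≤
        3 * ∑ j ∈ ({jdx L k'' k - 1, jdx L k'' k, jdx L k'' k + 1} : Finset ℕ),
          ‖gW L k'' h₁ h₂ j k‖ ^ 2 := by
      calc ‖h k k''‖ ^ 2
          ≤ (∑ j ∈ ({jdx L k'' k - 1, jdx L k'' k, jdx L k'' k + 1} : Finset ℕ),
              ‖gW L k'' h₁ h₂ j k‖) ^ 2 := pow_le_pow_left₀ (norm_nonneg _) hns 2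
        _ ≤ ((({jdx L k'' k - 1, jdx L k'' k, jdx L k'' k + 1} : Finset ℕ)).card : ℝ) *
            ∑ j ∈ ({jdx L k'' k - 1, jdx L k'' k, jdx L k'' k + 1} : Finset ℕ),
              ‖gW L k'' h₁ h₂ j k‖ ^ 2 := sq_sum_le_card_mul_sum_sq
        _ ≤ 3 * ∑ j ∈ ({jdx L k'' k - 1, jdx L k'' k, jdx L k'' k + 1} : Finset ℕ),
              ‖gW L k'' h₁ h₂ j k‖ ^ 2 := by
            apply mul_le_mul_of_nonneg_right _ (by positivity)
            exact_mod_cast hcard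
    calc (1 + dist3 k k'' / L) ^ (2 * κ) * ‖h k k''‖ ^ 2
        ≤ (1 + dist3 k k'' / L) ^ (2 * κ) *
          (3 * ∑ j ∈ ({jdx L k'' k - 1, jdx L k'' k, jdx L k'' k + 1} : Finset ℕ),
            ‖gW L k'' h₁ h₂ j k‖ ^ 2) := mul_le_mul_of_nonneg_left hsq hw0
      _ = 3 * ∑ j ∈ ({jdx L k'' k - 1, jdx L k'' k, jdx L k'' k + 1} : Finset ℕ),
            (1 + dist3 k k'' / L) ^ (2 * κ) * ‖gW L k'' h₁ h₂ j k‖ ^ 2 := by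
          rw [← Finset.mul_sum]
          ring
      _ ≤ 3 * ∑ j ∈ ({jdx L k'' k - 1, jdx L k'' k, jdx L k'' k + 1} : Finset ℕ),
            ((2:ℝ) ^ (j + 2)) ^ (2 * κ) * ‖gW L k'' h₁ h₂ j k‖ ^ 2 := by
          apply mul_le_mul_of_nonneg_left _ (by norm_num)
          apply Finset.sum_le_sum
          intro j _
          by_cases hgj : gW L k'' h₁ h₂ j k = 0
          · simp [hgj]
          · apply mul_le_mul_of_nonneg_right _ (by positivity)
            exact Real.rpow_le_rpow (le_trans zero_le_one (one_le_wbase hL0 k k'')) (hgne j k hgj).le h2κ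
  -- range N contains the relevant indices
  have hTsub : ∀ k ∈ Kf, ({jdx L k'' k - 1, jdx L k'' k, jdx L k'' k + 1} : Finset ℕ)
      ⊆ Finset.range N := by
    intro k hk j hj
    have hsup : jdx L k'' k ≤ (Kf ∪ K'f).sup (jdx L k'') :=
      Finset.le_sup (Finset.mem_union_left _ hk)
    simp only [Finset.mem_insert, Finset.mem_singleton] at hj
    simp only [Finset.mem_range, hN]
    omega
  -- operator norm step
  have hstep4 : ∀ j, ∑ k ∈ Kf, ‖gW L k'' h₁ h₂ j k‖ ^ 2 ≤
      K ^ 2 * ∑ k' ∈ K'f, ‖zW L k'' h₂ j k'‖ ^ 2 := by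
    intro j
    have h1 : ∑ k ∈ Kf, ‖gW L k'' h₁ h₂ j k‖ ^ 2 = ∑' k, ‖gW L k'' h₁ h₂ j k‖ ^ 2 :=
      (tsum_eq_sum fun k hk => by rw [hgzero j k hk]; simp).symm
    have h2 : (∑' k', ‖zW L k'' h₂ j k'‖ ^ 2) = ∑ k' ∈ K'f, ‖zW L k'' h₂ j k'‖ ^ 2 :=
      tsum_eq_sum fun k' hk' => by simp [zW, h₂zero k' hk']
    have h3 := hKop (zW L k'' h₂ j) (hzsupp j)
    rw [h1, ← h2]
    exact h3
  -- weight transfer on the z side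
  have hW : ∀ (j : ℕ) (k' : Fin 3 → ℤ), ((2:ℝ) ^ (j + 2)) ^ (2 * κ) * ‖zW L k'' h₂ j k'‖ ^ 2 ≤
      16 ^ κ * ((1 + dist3 k' k'' / L) ^ (2 * κ) * ‖zW L k'' h₂ j k'‖ ^ 2) := by
    intro j k'
    by_cases hz : zW L k'' h₂ j k' = 0
    · simp [hz]
    · have hjj : jdx L k'' k' = j := by
        by_contra hne
        exact hz (by simp [zW, hne])
      have hvge : (2:ℝ) ^ j ≤ 1 + dist3 k' k'' / L := hjj ▸ two_pow_jdx_le hL0 k'' k'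
      have h416 : ((2:ℝ) ^ (j + 2)) ^ (2 * κ) ≤ 16 ^ κ * (1 + dist3 k' k'' / L) ^ (2 * κ) := by
        have e1 : ((2:ℝ) ^ (j + 2)) = 4 * 2 ^ j := by ring
        rw [e1, Real.mul_rpow (by norm_num) (by positivity)]
        have e2 : (4:ℝ) ^ (2 * κ) = 16 ^ κ := by
          rw [show (2 * κ) = ((2:ℕ) : ℝ) * κ by norm_num,
            Real.rpow_mul (by norm_num : (0:ℝ) ≤ 4)]
          rw [Real.rpow_natCast]
          norm_num
        rw [e2]
        apply mul_le_mul_of_nonneg_left _ (Real.rpow_nonneg (by norm_num) κ)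
        exact Real.rpow_le_rpow (by positivity) hvge h2κ
      calc ((2:ℝ) ^ (j + 2)) ^ (2 * κ) * ‖zW L k'' h₂ j k'‖ ^ 2
          ≤ (16 ^ κ * (1 + dist3 k' k'' / L) ^ (2 * κ)) * ‖zW L k'' h₂ j k'‖ ^ 2 :=
            mul_le_mul_of_nonneg_right h416 (by positivity)
        _ = _ := by ring
  -- summing the z pieces back
  have hzsum : ∀ k' ∈ K'f, ∑ j ∈ Finset.range N, ‖zW L k'' h₂ j k'‖ ^ 2 = ‖h₂ k' k''‖ ^ 2 := by
    intro k' hk'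
    have hmem : jdx L k'' k' ∈ Finset.range N := by
      simp only [Finset.mem_range, hN]
      have := Finset.le_sup (f := jdx L k'') (Finset.mem_union_right Kf hk')
      omega
    have hpt : ∀ j, ‖zW L k'' h₂ j k'‖ ^ 2
        = if jdx L k'' k' = j then ‖h₂ k' k''‖ ^ 2 else 0 := by
      intro j
      by_cases hjj : jdx L k'' k' = j <;> simp [zW, hjj]
    simp only [hpt]
    rw [Finset.sum_ite_eq, if_pos hmem]
  -- per-j combined bound
  have hperj : ∀ j, ∑ k ∈ Kf, ((2:ℝ) ^ (j + 2)) ^ (2 * κ) * ‖gW L k'' h₁ h₂ j k‖ ^ 2 ≤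
      K ^ 2 * 16 ^ κ * ∑ k' ∈ K'f, (1 + dist3 k' k'' / L) ^ (2 * κ) * ‖zW L k'' h₂ j k'‖ ^ 2 := by
    intro j
    have hWpos : (0:ℝ) ≤ ((2:ℝ) ^ (j + 2)) ^ (2 * κ) := Real.rpow_nonneg (by positivity) _
    calc ∑ k ∈ Kf, ((2:ℝ) ^ (j + 2)) ^ (2 * κ) * ‖gW L k'' h₁ h₂ j k‖ ^ 2
        = ((2:ℝ) ^ (j + 2)) ^ (2 * κ) * ∑ k ∈ Kf, ‖gW L k'' h₁ h₂ j k‖ ^ 2 :=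
          (Finset.mul_sum _ _ _).symm
      _ ≤ ((2:ℝ) ^ (j + 2)) ^ (2 * κ) * (K ^ 2 * ∑ k' ∈ K'f, ‖zW L k'' h₂ j k'‖ ^ 2) :=
          mul_le_mul_of_nonneg_left (hstep4 j) hWpos
      _ = K ^ 2 * (((2:ℝ) ^ (j + 2)) ^ (2 * κ) * ∑ k' ∈ K'f, ‖zW L k'' h₂ j k'‖ ^ 2) := by ring
      _ = K ^ 2 * ∑ k' ∈ K'f, ((2:ℝ) ^ (j + 2)) ^ (2 * κ) * ‖zW L k'' h₂ j k'‖ ^ 2 := by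
          rw [Finset.mul_sum]
      _ ≤ K ^ 2 * ∑ k' ∈ K'f,
            16 ^ κ * ((1 + dist3 k' k'' / L) ^ (2 * κ) * ‖zW L k'' h₂ j k'‖ ^ 2) :=
          mul_le_mul_of_nonneg_left (Finset.sum_le_sum fun k' _ => hW j k') (sq_nonneg K)
      _ = K ^ 2 * (16 ^ κ *
            ∑ k' ∈ K'f, (1 + dist3 k' k'' / L) ^ (2 * κ) * ‖zW L k'' h₂ j k'‖ ^ 2) := by
          rw [← Finset.mul_sum]
      _ = K ^ 2 * 16 ^ κ *
            ∑ k' ∈ K'f, (1 + dist3 k' k'' / L) ^ (2 * κ) * ‖zW L k'' h₂ j k'‖ ^ 2 := by ring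
  -- final chain
  calc ∑ k ∈ Kf, (1 + dist3 k k'' / L) ^ (2 * κ) * ‖h k k''‖ ^ 2
      ≤ ∑ k ∈ Kf, 3 * ∑ j ∈ ({jdx L k'' k - 1, jdx L k'' k, jdx L k'' k + 1} : Finset ℕ),
          ((2:ℝ) ^ (j + 2)) ^ (2 * κ) * ‖gW L k'' h₁ h₂ j k‖ ^ 2 :=
        Finset.sum_le_sum fun k _ => hstep12 k
    _ = 3 * ∑ k ∈ Kf, ∑ j ∈ ({jdx L k'' k - 1, jdx L k'' k, jdx L k'' k + 1} : Finset ℕ),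
          ((2:ℝ) ^ (j + 2)) ^ (2 * κ) * ‖gW L k'' h₁ h₂ j k‖ ^ 2 :=
        (Finset.mul_sum _ _ _).symm
    _ ≤ 3 * ∑ k ∈ Kf, ∑ j ∈ Finset.range N,
          ((2:ℝ) ^ (j + 2)) ^ (2 * κ) * ‖gW L k'' h₁ h₂ j k‖ ^ 2 := by
        apply mul_le_mul_of_nonneg_left _ (by norm_num)
        apply Finset.sum_le_sum
        intro k hk
        refine Finset.sum_le_sum_of_subset_of_nonneg (hTsub k hk) (fun j _ _ => ?_)
        have : (0:ℝ) ≤ ((2:ℝ) ^ (j + 2)) ^ (2 * κ) := Real.rpow_nonneg (by positivity) _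
        positivity
    _ = 3 * ∑ j ∈ Finset.range N, ∑ k ∈ Kf,
          ((2:ℝ) ^ (j + 2)) ^ (2 * κ) * ‖gW L k'' h₁ h₂ j k‖ ^ 2 := by
        rw [Finset.sum_comm]
    _ ≤ 3 * ∑ j ∈ Finset.range N, K ^ 2 * 16 ^ κ *
          ∑ k' ∈ K'f, (1 + dist3 k' k'' / L) ^ (2 * κ) * ‖zW L k'' h₂ j k'‖ ^ 2 :=
        mul_le_mul_of_nonneg_left (Finset.sum_le_sum fun j _ => hperj j) (by norm_num)
    _ = 3 * (K ^ 2 * 16 ^ κ) * ∑ j ∈ Finset.range N,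
          ∑ k' ∈ K'f, (1 + dist3 k' k'' / L) ^ (2 * κ) * ‖zW L k'' h₂ j k'‖ ^ 2 := by
        rw [← Finset.mul_sum]
        ring
    _ = 3 * (K ^ 2 * 16 ^ κ) * ∑ k' ∈ K'f,
          ∑ j ∈ Finset.range N, (1 + dist3 k' k'' / L) ^ (2 * κ) * ‖zW L k'' h₂ j k'‖ ^ 2 := by
        rw [Finset.sum_comm]
    _ = 3 * (K ^ 2 * 16 ^ κ) * ∑ k' ∈ K'f,
          (1 + dist3 k' k'' / L) ^ (2 * κ) * ‖h₂ k' k''‖ ^ 2 := by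
        congr 1
        refine Finset.sum_congr rfl fun k' hk' => ?_
        rw [← Finset.mul_sum, hzsum k' hk']
    _ = 3 * 16 ^ κ * K ^ 2 *
          ∑ k' ∈ K'f, (1 + dist3 k' k'' / L) ^ (2 * κ) * ‖h₂ k' k''‖ ^ 2 := by ring


/-- Proposition 2.8 (weighted bounds): if `h⁽¹⁾` is supported on `|k - k'| ≤ L` and
`h_{k k''} = ∑_{k'} h⁽¹⁾_{k k'} h⁽²⁾_{k' k''}`, then the `κ`-weighted Hilbert–Schmidt norm of
`h` is bounded by `C_κ` times the operator norm of `h⁽¹⁾` times the `κ`-weighted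
Hilbert–Schmidt norm of `h⁽²⁾`. -/
theorem weighted_bounds :
    ∀ κ : ℝ, 0 ≤ κ → ∃ C : ℝ, 0 < C ∧
      ∀ L : ℝ, 1 ≤ L →
      ∀ h₁ h₂ : (Fin 3 → ℤ) → (Fin 3 → ℤ) → ℂ,
        (Function.support fun p : (Fin 3 → ℤ) × (Fin 3 → ℤ) => h₁ p.1 p.2).Finite →
        (Function.support fun p : (Fin 3 → ℤ) × (Fin 3 → ℤ) => h₂ p.1 p.2).Finite →
        (∀ k k' : Fin 3 → ℤ, L < dist3 k k' → h₁ k k' = 0) →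
        ∀ h : (Fin 3 → ℤ) → (Fin 3 → ℤ) → ℂ,
          (∀ k k'' : Fin 3 → ℤ, h k k'' = ∑' k' : Fin 3 → ℤ, h₁ k k' * h₂ k' k'') →
          Real.sqrt (∑' p : (Fin 3 → ℤ) × (Fin 3 → ℤ),
              (1 + dist3 p.1 p.2 / L) ^ (2 * κ) * ‖h p.1 p.2‖ ^ 2) ≤
            C * matOpNorm h₁ *
              Real.sqrt (∑' p : (Fin 3 → ℤ) × (Fin 3 → ℤ),
                (1 + dist3 p.1 p.2 / L) ^ (2 * κ) * ‖h₂ p.1 p.2‖ ^ 2) := by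
  intro κ hκ
  refine ⟨2 * 16 ^ κ, by positivity, ?_⟩
  intro L hL h₁ h₂ hf₁ hf₂ hband h hdef
  classical
  have hL0 : (0:ℝ) < L := lt_of_lt_of_le one_pos hL
  obtain ⟨hK0, hKop⟩ := matOpNorm_mem h₁ hf₁
  have hnear : ∀ k k', h₁ k k' ≠ 0 → dist3 k k' ≤ L := fun k k' hne =>
    le_of_not_gt fun hlt => hne (hband _ _ hlt)
  obtain ⟨Kf, hKfz⟩ : ∃ s : Finset (Fin 3 → ℤ), ∀ k, k ∉ s → ∀ k', h₁ k k' = 0 := by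
    refine ⟨hf₁.toFinset.image Prod.fst, fun k hk k' => ?_⟩
    by_contra hne
    exact hk (Finset.mem_image.2 ⟨(k, k'), hf₁.mem_toFinset.2 hne, rfl⟩)
  obtain ⟨K'f, hK'fz⟩ : ∃ s : Finset (Fin 3 → ℤ), ∀ k', k' ∉ s → ∀ k'', h₂ k' k'' = 0 := by
    refine ⟨hf₂.toFinset.image Prod.fst, fun k' hk' k'' => ?_⟩
    by_contra hne
    exact hk' (Finset.mem_image.2 ⟨(k', k''), hf₂.mem_toFinset.2 hne, rfl⟩)
  obtain ⟨K''f, hK''fz⟩ : ∃ s : Finset (Fin 3 → ℤ), ∀ k'', k'' ∉ s → ∀ k', h₂ k' k'' = 0 := by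
    refine ⟨hf₂.toFinset.image Prod.snd, fun k'' hk'' k' => ?_⟩
    by_contra hne
    exact hk'' (Finset.mem_image.2 ⟨(k', k''), hf₂.mem_toFinset.2 hne, rfl⟩)
  have hzero : ∀ p : (Fin 3 → ℤ) × (Fin 3 → ℤ), p ∉ Kf ×ˢ K''f → h p.1 p.2 = 0 := by
    intro p hp
    rw [hdef]
    have : (fun k' => h₁ p.1 k' * h₂ k' p.2) = fun _ => 0 := by
      funext k'
      by_cases h1 : p.1 ∈ Kf
      · have h2 : p.2 ∉ K''f := by
          intro h2'
          exact hp (Finset.mem_product.2 ⟨h1, h2'⟩)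
        rw [hK''fz p.2 h2 k', mul_zero]
      · rw [hKfz p.1 h1 k', zero_mul]
    rw [this, tsum_zero]
  have hsum1 : (∑' p : (Fin 3 → ℤ) × (Fin 3 → ℤ),
        (1 + dist3 p.1 p.2 / L) ^ (2 * κ) * ‖h p.1 p.2‖ ^ 2)
      = ∑ k'' ∈ K''f, ∑ k ∈ Kf, (1 + dist3 k k'' / L) ^ (2 * κ) * ‖h k k''‖ ^ 2 := by
    rw [tsum_eq_sum (s := Kf ×ˢ K''f) (fun p hp => by rw [hzero p hp]; simp)]
    rw [Finset.sum_product]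
    rw [Finset.sum_comm]
  have hsum2 : (∑' p : (Fin 3 → ℤ) × (Fin 3 → ℤ),
        (1 + dist3 p.1 p.2 / L) ^ (2 * κ) * ‖h₂ p.1 p.2‖ ^ 2)
      = ∑ k'' ∈ K''f, ∑ k' ∈ K'f, (1 + dist3 k' k'' / L) ^ (2 * κ) * ‖h₂ k' k''‖ ^ 2 := by
    rw [tsum_eq_sum (s := K'f ×ˢ K''f) (fun p hp => ?_)]
    · rw [Finset.sum_product]
      rw [Finset.sum_comm]
    · have : h₂ p.1 p.2 = 0 := by
        by_cases h1 : p.1 ∈ K'f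
        · have h2 : p.2 ∉ K''f := by
            intro h2'
            exact hp (Finset.mem_product.2 ⟨h1, h2'⟩)
          exact hK''fz p.2 h2 p.1
        · exact hK'fz p.1 h1 p.2
      rw [this]
      simp
  have hmain : (∑' p : (Fin 3 → ℤ) × (Fin 3 → ℤ),
        (1 + dist3 p.1 p.2 / L) ^ (2 * κ) * ‖h p.1 p.2‖ ^ 2)
      ≤ 3 * 16 ^ κ * (matOpNorm h₁) ^ 2 * ∑' p : (Fin 3 → ℤ) × (Fin 3 → ℤ),
        (1 + dist3 p.1 p.2 / L) ^ (2 * κ) * ‖h₂ p.1 p.2‖ ^ 2 := by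
    rw [hsum1, hsum2]
    calc ∑ k'' ∈ K''f, ∑ k ∈ Kf, (1 + dist3 k k'' / L) ^ (2 * κ) * ‖h k k''‖ ^ 2
        ≤ ∑ k'' ∈ K''f, 3 * 16 ^ κ * (matOpNorm h₁) ^ 2 *
            ∑ k' ∈ K'f, (1 + dist3 k' k'' / L) ^ (2 * κ) * ‖h₂ k' k''‖ ^ 2 :=
          Finset.sum_le_sum fun k'' _ =>
            key_estimate hκ hL h₁ h₂ h k'' (matOpNorm h₁) hKop Kf K'f hKfz
              (fun k' hk' => hK'fz k' hk' k'') hnear (fun k => hdef k k'')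
      _ = 3 * 16 ^ κ * (matOpNorm h₁) ^ 2 *
            ∑ k'' ∈ K''f, ∑ k' ∈ K'f, (1 + dist3 k' k'' / L) ^ (2 * κ) * ‖h₂ k' k''‖ ^ 2 :=
          (Finset.mul_sum _ _ _).symm
  have hBnn : (0:ℝ) ≤ ∑' p : (Fin 3 → ℤ) × (Fin 3 → ℤ),
      (1 + dist3 p.1 p.2 / L) ^ (2 * κ) * ‖h₂ p.1 p.2‖ ^ 2 :=
    tsum_nonneg fun p => mul_nonneg
      (Real.rpow_nonneg (le_trans zero_le_one (one_le_wbase hL0 p.1 p.2)) _) (sq_nonneg _)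
  have h16 : (1:ℝ) ≤ 16 ^ κ := Real.one_le_rpow (by norm_num) hκ
  have hcomp : (∑' p : (Fin 3 → ℤ) × (Fin 3 → ℤ),
        (1 + dist3 p.1 p.2 / L) ^ (2 * κ) * ‖h p.1 p.2‖ ^ 2)
      ≤ (2 * 16 ^ κ * matOpNorm h₁) ^ 2 * ∑' p : (Fin 3 → ℤ) × (Fin 3 → ℤ),
        (1 + dist3 p.1 p.2 / L) ^ (2 * κ) * ‖h₂ p.1 p.2‖ ^ 2 := by
    refine le_trans hmain ?_
    have h1 : (3:ℝ) * 16 ^ κ ≤ ((2:ℝ) * 16 ^ κ) ^ 2 := by nlinarith [h16]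
    have h2 : (3:ℝ) * 16 ^ κ * (matOpNorm h₁) ^ 2 ≤ ((2:ℝ) * 16 ^ κ) ^ 2 * (matOpNorm h₁) ^ 2 :=
      mul_le_mul_of_nonneg_right h1 (sq_nonneg _)
    have h3 : ((2:ℝ) * 16 ^ κ) ^ 2 * (matOpNorm h₁) ^ 2 = ((2:ℝ) * 16 ^ κ * matOpNorm h₁) ^ 2 := by
      ring
    rw [← h3]
    exact mul_le_mul_of_nonneg_right h2 hBnn
  have hCK : (0:ℝ) ≤ 2 * 16 ^ κ * matOpNorm h₁ :=
    mul_nonneg (by positivity) hK0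
  calc Real.sqrt (∑' p : (Fin 3 → ℤ) × (Fin 3 → ℤ),
        (1 + dist3 p.1 p.2 / L) ^ (2 * κ) * ‖h p.1 p.2‖ ^ 2)
      ≤ Real.sqrt ((2 * 16 ^ κ * matOpNorm h₁) ^ 2 * ∑' p : (Fin 3 → ℤ) × (Fin 3 → ℤ),
          (1 + dist3 p.1 p.2 / L) ^ (2 * κ) * ‖h₂ p.1 p.2‖ ^ 2) := Real.sqrt_le_sqrt hcomp
    _ = 2 * 16 ^ κ * matOpNorm h₁ * Real.sqrt (∑' p : (Fin 3 → ℤ) × (Fin 3 → ℤ),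
          (1 + dist3 p.1 p.2 / L) ^ (2 * κ) * ‖h₂ p.1 p.2‖ ^ 2) := by
        rw [Real.sqrt_mul (sq_nonneg _), Real.sqrt_sq hCK]
end
end
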